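/- arXiv:2006.16853 — 7 statements merged into one kernel-verified Lean document; each statement's English description precedes it below -/
import Mathlib

section
/- Let C_1, C_2 ≥ 0, let U ⊆ (0,1) and V ⊆ (0,1) be open, let g : U → ℝ be C_1-mild with g(U) ⊆ V, and let f : V → ℝ be C_2-mild. Then f ∘ g : U → ℝ is max(C_1, C_2)-mild. -/
open Real Set

/-- A function `f` is `(A,B,C)`-mild on an open set `U ⊆ (0,1)`:
`f` is `C^∞` on `U` and `|f⁽ⁿ⁾(x)| ≤ B Aⁿ (n!)^(C+1)` for all `x ∈ U`, `n ∈ ℕ`. -/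
def IsMild (U : Set ℝ) (f : ℝ → ℝ) (A B C : ℝ) : Prop :=
  ContDiffOn ℝ (⊤ : ℕ∞) f U ∧
    ∀ x ∈ U, ∀ n : ℕ, |iteratedDeriv n f x| ≤ B * A ^ n * (n.factorial : ℝ) ^ (C + 1)

/-- A function is `C`-mild if it is `(A,B,C)`-mild for some `A, B > 0`. -/
def IsCMild (U : Set ℝ) (f : ℝ → ℝ) (C : ℝ) : Prop :=
  ∃ A B : ℝ, 0 < A ∧ 0 < B ∧ IsMild U f A B C

namespace OrderedFinpartition

lemma sum_partSize {n : ℕ} (c : OrderedFinpartition n) : ∑ i, c.partSize i = n := by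
  have := Fintype.card_congr c.equivSigma
  simpa using this

lemma length_eq_zero (c : OrderedFinpartition 0) : c.length = 0 :=
  Nat.le_zero.mp c.length_le

lemma prod_update_fact {n : ℕ} (c : OrderedFinpartition n) (j : Fin c.length) :
    ∏ i, ((Function.update c.partSize j (c.partSize j + 1) i : ℕ).factorial : ℝ)
      = (c.partSize j + 1) * ∏ i, ((c.partSize i).factorial : ℝ) := by
  classical
  have h1 : ∏ i, ((Function.update c.partSize j (c.partSize j + 1) i : ℕ).factorial : ℝ)
      = ((c.partSize j + 1).factorial : ℝ) *
        ∏ i ∈ Finset.univ.erase j, ((c.partSize i).factorial : ℝ) := by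
    rw [← Finset.mul_prod_erase Finset.univ _ (Finset.mem_univ j)]
    congr 1
    · simp
    · exact Finset.prod_congr rfl fun i hi => by
        rw [Function.update_of_ne (Finset.ne_of_mem_erase hi)]
  rw [h1, ← Finset.mul_prod_erase Finset.univ (fun i => ((c.partSize i).factorial : ℝ))
    (Finset.mem_univ j)]
  rw [Nat.factorial_succ]
  push_cast
  ring

lemma prod_cons_fact {n : ℕ} (c : OrderedFinpartition n) :
    ∏ i : Fin (c.length + 1), (((Fin.cons 1 c.partSize : Fin _ → ℕ) i).factorial : ℝ)
      = ∏ i, ((c.partSize i).factorial : ℝ) := by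
  rw [Fin.prod_univ_succ]
  simp

lemma fact_le {n : ℕ} (c : OrderedFinpartition n) :
    (c.length.factorial : ℝ) * ∏ i, ((c.partSize i).factorial : ℝ) ≤ (n.factorial : ℝ) := by
  induction n with
  | zero =>
    have h := c.length_eq_zero
    have : IsEmpty (Fin c.length) := by rw [h]; infer_instance
    simp [h, Finset.univ_eq_empty]
  | succ n ih =>
    obtain ⟨⟨c', o⟩, rfl⟩ := (extendEquiv n).surjective c
    match o with
    | none =>
      show ((c'.length + 1).factorial : ℝ) *
        ∏ i : Fin (c'.length + 1), (((Fin.cons 1 c'.partSize : Fin _ → ℕ) i).factorial : ℝ) ≤ _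
      rw [prod_cons_fact, Nat.factorial_succ]
      have hX : (0:ℝ) ≤ (c'.length.factorial : ℝ) * ∏ i, ((c'.partSize i).factorial : ℝ) := by
        positivity
      have h1 : (c'.length : ℝ) + 1 ≤ (n : ℝ) + 1 := by
        have := c'.length_le; exact_mod_cast Nat.succ_le_succ this
      have h2 : ((n+1).factorial : ℝ) = ((n:ℝ)+1) * (n.factorial : ℝ) := by
        rw [Nat.factorial_succ]; push_cast; ring
      push_cast
      rw [h2, mul_assoc]
      calc ((c'.length : ℝ) + 1) * ((c'.length.factorial : ℝ) * ∏ i, ((c'.partSize i).factorial : ℝ))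
          ≤ ((n : ℝ) + 1) * ((c'.length.factorial : ℝ) * ∏ i, ((c'.partSize i).factorial : ℝ)) :=
            mul_le_mul_of_nonneg_right h1 hX
        _ ≤ ((n : ℝ) + 1) * (n.factorial : ℝ) :=
            mul_le_mul_of_nonneg_left (ih c') (by positivity)
    | some j =>
      show (c'.length.factorial : ℝ) *
        ∏ i, ((Function.update c'.partSize j (c'.partSize j + 1) i : ℕ).factorial : ℝ) ≤ _
      rw [prod_update_fact]
      have hX : (0:ℝ) ≤ (c'.length.factorial : ℝ) * ∏ i, ((c'.partSize i).factorial : ℝ) := by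
        positivity
      have hps : (c'.partSize j : ℝ) + 1 ≤ (n : ℝ) + 1 := by
        have := c'.partSize_le j; exact_mod_cast Nat.succ_le_succ this
      have h2 : ((n+1).factorial : ℝ) = ((n:ℝ)+1) * (n.factorial : ℝ) := by
        rw [Nat.factorial_succ]; push_cast; ring
      rw [h2]
      calc (c'.length.factorial : ℝ) *
            (((c'.partSize j : ℝ) + 1) * ∏ i, ((c'.partSize i).factorial : ℝ))
          = ((c'.partSize j : ℝ) + 1) *
            ((c'.length.factorial : ℝ) * ∏ i, ((c'.partSize i).factorial : ℝ)) := by ring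
        _ ≤ ((n : ℝ) + 1) * ((c'.length.factorial : ℝ) * ∏ i, ((c'.partSize i).factorial : ℝ)) :=
            mul_le_mul_of_nonneg_right hps hX
        _ ≤ ((n : ℝ) + 1) * (n.factorial : ℝ) :=
            mul_le_mul_of_nonneg_left (ih c') (by positivity)

end OrderedFinpartition

namespace OrderedFinpartition

lemma key_sum {x : ℝ} (hx : 0 ≤ x) : ∀ n : ℕ,
    ∑ c : OrderedFinpartition n, x ^ c.length * (c.length.factorial : ℝ) *
      ∏ i, ((c.partSize i).factorial : ℝ) ≤ (n.factorial : ℝ) * (x + 2) ^ n := by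
  intro n
  induction n with
  | zero =>
    have : ∀ c : OrderedFinpartition 0, x ^ c.length * (c.length.factorial : ℝ) *
        ∏ i, ((c.partSize i).factorial : ℝ) = 1 := by
      intro c
      have h := c.length_eq_zero
      have : IsEmpty (Fin c.length) := by rw [h]; infer_instance
      simp [h, Finset.univ_eq_empty]
    rw [Finset.sum_congr rfl (fun c _ => this c)]
    simp
  | succ n ih =>
    have hcomp := Equiv.sum_comp (extendEquiv n) (fun c : OrderedFinpartition (n+1) =>
      x ^ c.length * (c.length.factorial : ℝ) * ∏ i, ((c.partSize i).factorial : ℝ))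
    rw [← hcomp]
    rw [← Finset.univ_sigma_univ, Finset.sum_sigma]
    have hterm : ∀ c : OrderedFinpartition n,
        ∑ o : Option (Fin c.length), (x ^ ((extendEquiv n) ⟨c, o⟩).length *
          ((((extendEquiv n) ⟨c, o⟩).length.factorial : ℝ)) *
          ∏ i, ((((extendEquiv n) ⟨c, o⟩).partSize i).factorial : ℝ))
        ≤ ((n:ℝ) + 1) * (x + 2) *
          (x ^ c.length * (c.length.factorial : ℝ) * ∏ i, ((c.partSize i).factorial : ℝ)) := by
      intro c
      rw [Fintype.sum_option]
      have hnone : x ^ ((extendEquiv n) ⟨c, none⟩).length *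
          ((((extendEquiv n) ⟨c, none⟩).length.factorial : ℝ)) *
          ∏ i, ((((extendEquiv n) ⟨c, none⟩).partSize i).factorial : ℝ)
          = x * ((c.length : ℝ) + 1) *
            (x ^ c.length * (c.length.factorial : ℝ) * ∏ i, ((c.partSize i).factorial : ℝ)) := by
        show x ^ (c.length + 1) * (((c.length + 1).factorial : ℝ)) *
          ∏ i : Fin (c.length + 1), (((Fin.cons 1 c.partSize : Fin _ → ℕ) i).factorial : ℝ) = _
        rw [prod_cons_fact, Nat.factorial_succ]
        push_cast
        ring
      have hsome : ∀ j : Fin c.length, x ^ ((extendEquiv n) ⟨c, some j⟩).length *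
          ((((extendEquiv n) ⟨c, some j⟩).length.factorial : ℝ)) *
          ∏ i, ((((extendEquiv n) ⟨c, some j⟩).partSize i).factorial : ℝ)
          = ((c.partSize j : ℝ) + 1) *
            (x ^ c.length * (c.length.factorial : ℝ) * ∏ i, ((c.partSize i).factorial : ℝ)) := by
        intro j
        show x ^ c.length * ((c.length.factorial : ℝ)) *
          ∏ i, ((Function.update c.partSize j (c.partSize j + 1) i : ℕ).factorial : ℝ) = _
        rw [prod_update_fact]
        push_cast
        ring
      rw [hnone, Finset.sum_congr rfl (fun j _ => hsome j)]
      rw [← Finset.sum_mul]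
      have hsum : ∑ j : Fin c.length, ((c.partSize j : ℝ) + 1) = (n : ℝ) + c.length := by
        rw [Finset.sum_add_distrib]
        simp only [Finset.sum_const, Finset.card_univ, Fintype.card_fin, nsmul_eq_mul, mul_one]
        have : ∑ j : Fin c.length, (c.partSize j : ℝ) = (n : ℝ) := by
          rw [← Nat.cast_sum]
          exact_mod_cast congrArg (Nat.cast : ℕ → ℝ) c.sum_partSize
        rw [this]
      rw [hsum, ← add_mul]
      have hF : 0 ≤ x ^ c.length * (c.length.factorial : ℝ) *
          ∏ i, ((c.partSize i).factorial : ℝ) := by positivity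
      apply mul_le_mul_of_nonneg_right _ hF
      have hk : (c.length : ℝ) ≤ n := by exact_mod_cast c.length_le
      nlinarith [hx, hk]
    calc ∑ c : OrderedFinpartition n, ∑ o : Option (Fin c.length),
          (x ^ ((extendEquiv n) ⟨c, o⟩).length *
          ((((extendEquiv n) ⟨c, o⟩).length.factorial : ℝ)) *
          ∏ i, ((((extendEquiv n) ⟨c, o⟩).partSize i).factorial : ℝ))
        ≤ ∑ c : OrderedFinpartition n, ((n:ℝ) + 1) * (x + 2) *
          (x ^ c.length * (c.length.factorial : ℝ) * ∏ i, ((c.partSize i).factorial : ℝ)) :=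
          Finset.sum_le_sum (fun c _ => hterm c)
      _ = ((n:ℝ) + 1) * (x + 2) * ∑ c : OrderedFinpartition n,
          (x ^ c.length * (c.length.factorial : ℝ) * ∏ i, ((c.partSize i).factorial : ℝ)) := by
          rw [Finset.mul_sum]
      _ ≤ ((n:ℝ) + 1) * (x + 2) * ((n.factorial : ℝ) * (x + 2) ^ n) := by
          apply mul_le_mul_of_nonneg_left ih (by positivity)
      _ = ((n+1).factorial : ℝ) * (x + 2) ^ (n+1) := by
          rw [Nat.factorial_succ]
          push_cast
          ring

end OrderedFinpartition

namespace OrderedFinpartition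

lemma norm_compAlong_le {n : ℕ} (c : OrderedFinpartition n)
    (f : ContinuousMultilinearMap ℝ (fun _ : Fin c.length => ℝ) ℝ)
    (p : ∀ i : Fin c.length, ContinuousMultilinearMap ℝ (fun _ : Fin (c.partSize i) => ℝ) ℝ) :
    ‖c.compAlongOrderedFinpartition f p‖ ≤ ‖f‖ * ∏ i, ‖p i‖ := by
  apply ContinuousMultilinearMap.opNorm_le_bound (by positivity) (fun v => ?_)
  simp only [compAlongOrderFinpartition_apply]
  apply (f.le_opNorm _).trans
  rw [mul_assoc, ← c.prod_sigma_eq_prod, ← Finset.prod_mul_distrib]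
  gcongr with m _
  exact (p m).le_opNorm _

end OrderedFinpartition

-- helper: within = global for iterated deriv on open sets
lemma iteratedDerivWithin_of_isOpen' {n : ℕ} {f : ℝ → ℝ} {s : Set ℝ} {x : ℝ}
    (hs : IsOpen s) (hx : x ∈ s) :
    iteratedDerivWithin n f s x = iteratedDeriv n f x := by
  rw [iteratedDerivWithin, iteratedDeriv, iteratedFDerivWithin_of_isOpen n hs hx]

theorem stmt2 (C₁ C₂ : ℝ) (hC₁ : 0 ≤ C₁) (hC₂ : 0 ≤ C₂)
    (U V : Set ℝ) (hUo : IsOpen U) (hVo : IsOpen V) (hU : U ⊆ Ioo 0 1) (hV : V ⊆ Ioo 0 1)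
    (f g : ℝ → ℝ) (hg : IsCMild U g C₁) (hgV : ∀ x ∈ U, g x ∈ V)
    (hf : IsCMild V f C₂) :
    IsCMild U (f ∘ g) (max C₁ C₂) := by
  classical
  obtain ⟨A₁, B₁, hA₁, hB₁, hg₁, hg₂⟩ := hg
  obtain ⟨A₂, B₂, hA₂, hB₂, hf₁, hf₂⟩ := hf
  set s' : ℝ := max C₁ C₂ with hs'
  have hs'0 : 0 ≤ s' := le_trans hC₁ (le_max_left _ _)
  refine ⟨A₁ * (A₂ * B₁ + 2), B₂, by positivity, hB₂, ?_, ?_⟩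
  · exact hf₁.comp hg₁ (fun x hx => hgV x hx)
  · intro x hx n
    -- Taylor series setup
    have hqT : HasFTaylorSeriesUpToOn (⊤ : ℕ∞) f (ftaylorSeriesWithin ℝ f V) V :=
      (hf₁.of_le (by simp)).ftaylorSeriesWithin hVo.uniqueDiffOn
    have hpT : HasFTaylorSeriesUpToOn (⊤ : ℕ∞) g (ftaylorSeriesWithin ℝ g U) U :=
      (hg₁.of_le (by simp)).ftaylorSeriesWithin hUo.uniqueDiffOn
    have hcomp := hqT.comp hpT (fun y hy => hgV y hy)
    have hrepr : iteratedFDerivWithin ℝ n (f ∘ g) U x =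
        ∑ c : OrderedFinpartition n,
          ((ftaylorSeriesWithin ℝ f V (g x)).compAlongOrderedFinpartition
            (ftaylorSeriesWithin ℝ g U x) c) :=
      (hcomp.eq_iteratedFDerivWithin_of_uniqueDiffOn (by exact_mod_cast le_top)
        hUo.uniqueDiffOn hx).symm
    have habs : |iteratedDeriv n (f ∘ g) x| = ‖iteratedFDerivWithin ℝ n (f ∘ g) U x‖ := by
      rw [iteratedFDerivWithin_of_isOpen n hUo hx, norm_iteratedFDeriv_eq_norm_iteratedDeriv,
        Real.norm_eq_abs]
    -- bounds on the pieces
    have hfb : ∀ k : ℕ, ‖ftaylorSeriesWithin ℝ f V (g x) k‖ ≤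
        B₂ * A₂ ^ k * (k.factorial : ℝ) ^ (s' + 1) := by
      intro k
      have h1 : ‖ftaylorSeriesWithin ℝ f V (g x) k‖ = |iteratedDeriv k f (g x)| := by
        show ‖iteratedFDerivWithin ℝ k f V (g x)‖ = _
        rw [norm_iteratedFDerivWithin_eq_norm_iteratedDerivWithin,
          iteratedDerivWithin_of_isOpen' hVo (hgV x hx), Real.norm_eq_abs]
      rw [h1]
      refine (hf₂ (g x) (hgV x hx) k).trans ?_
      have : (k.factorial : ℝ) ^ (C₂ + 1) ≤ (k.factorial : ℝ) ^ (s' + 1) := by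
        apply Real.rpow_le_rpow_of_exponent_le
        · exact_mod_cast Nat.one_le_iff_ne_zero.mpr k.factorial_ne_zero
        · have : C₂ ≤ s' := le_max_right _ _
          linarith
      have h0 : 0 ≤ B₂ * A₂ ^ k := by positivity
      calc B₂ * A₂ ^ k * (k.factorial : ℝ) ^ (C₂ + 1)
          ≤ B₂ * A₂ ^ k * (k.factorial : ℝ) ^ (s' + 1) :=
            mul_le_mul_of_nonneg_left this h0
        _ = _ := rfl
    have hgb : ∀ k : ℕ, ‖ftaylorSeriesWithin ℝ g U x k‖ ≤
        B₁ * A₁ ^ k * (k.factorial : ℝ) ^ (s' + 1) := by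
      intro k
      have h1 : ‖ftaylorSeriesWithin ℝ g U x k‖ = |iteratedDeriv k g x| := by
        show ‖iteratedFDerivWithin ℝ k g U x‖ = _
        rw [norm_iteratedFDerivWithin_eq_norm_iteratedDerivWithin,
          iteratedDerivWithin_of_isOpen' hUo hx, Real.norm_eq_abs]
      rw [h1]
      refine (hg₂ x hx k).trans ?_
      have : (k.factorial : ℝ) ^ (C₁ + 1) ≤ (k.factorial : ℝ) ^ (s' + 1) := by
        apply Real.rpow_le_rpow_of_exponent_le
        · exact_mod_cast Nat.one_le_iff_ne_zero.mpr k.factorial_ne_zero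
        · have : C₁ ≤ s' := le_max_left _ _
          linarith
      have h0 : 0 ≤ B₁ * A₁ ^ k := by positivity
      exact mul_le_mul_of_nonneg_left this h0
    -- per-partition bound
    have hterm : ∀ c : OrderedFinpartition n,
        ‖(ftaylorSeriesWithin ℝ f V (g x)).compAlongOrderedFinpartition
            (ftaylorSeriesWithin ℝ g U x) c‖ ≤
          B₂ * A₁ ^ n * (n.factorial : ℝ) ^ s' *
            ((A₂ * B₁) ^ c.length * (c.length.factorial : ℝ) *
              ∏ i, ((c.partSize i).factorial : ℝ)) := by
      intro c
      set k := c.length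
      set P := ∏ i, ((c.partSize i).factorial : ℝ) with hP
      have hP1 : (1:ℝ) ≤ (k.factorial : ℝ) * P := by
        have : (1:ℝ) ≤ (k.factorial : ℝ) :=
          by exact_mod_cast Nat.one_le_iff_ne_zero.mpr k.factorial_ne_zero
        have h2 : (1:ℝ) ≤ P := by
          rw [hP]
          have hfac : ∀ i : Fin c.length, (1:ℝ) ≤ ((c.partSize i).factorial : ℝ) := fun i => by
            exact_mod_cast Nat.one_le_iff_ne_zero.mpr (c.partSize i).factorial_ne_zero
          calc (1:ℝ) = ∏ _i : Fin c.length, (1:ℝ) := by simp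
            _ ≤ ∏ i : Fin c.length, ((c.partSize i).factorial : ℝ) :=
                Finset.prod_le_prod (fun i _ => zero_le_one) (fun i _ => hfac i)
        nlinarith
      have hPpos : (0:ℝ) < (k.factorial : ℝ) * P := lt_of_lt_of_le one_pos hP1
      have step1 := c.norm_compAlong_le (ftaylorSeriesWithin ℝ f V (g x) k)
        (fun i => ftaylorSeriesWithin ℝ g U x (c.partSize i))
      refine step1.trans ?_
      have step2 : ‖ftaylorSeriesWithin ℝ f V (g x) k‖ *
          ∏ i, ‖ftaylorSeriesWithin ℝ g U x (c.partSize i)‖ ≤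
          (B₂ * A₂ ^ k * (k.factorial : ℝ) ^ (s' + 1)) *
          ∏ i, (B₁ * A₁ ^ (c.partSize i) * ((c.partSize i).factorial : ℝ) ^ (s' + 1)) := by
        apply mul_le_mul (hfb k) _ (Finset.prod_nonneg fun i _ => norm_nonneg _) (by positivity)
        apply Finset.prod_le_prod (fun i _ => norm_nonneg _) (fun i _ => hgb (c.partSize i))
      refine step2.trans ?_
      -- now pure algebra
      have e1 : ∏ i, (B₁ * A₁ ^ (c.partSize i) * ((c.partSize i).factorial : ℝ) ^ (s' + 1))
          = B₁ ^ k * A₁ ^ n * P ^ (s' + 1) := by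
        rw [Finset.prod_mul_distrib, Finset.prod_mul_distrib]
        congr 1
        · congr 1
          · simp [Finset.prod_const, Finset.card_univ]; rfl
          · rw [Finset.prod_pow_eq_pow_sum, c.sum_partSize]
        · rw [Real.finset_prod_rpow _ _ (fun i _ => by positivity) _]
      rw [e1]
      have e2 : (B₂ * A₂ ^ k * (k.factorial : ℝ) ^ (s' + 1)) * (B₁ ^ k * A₁ ^ n * P ^ (s' + 1))
          = B₂ * (A₂ * B₁) ^ k * A₁ ^ n * ((k.factorial : ℝ) * P) ^ (s' + 1) := by
        rw [Real.mul_rpow (by positivity) (by positivity), mul_pow]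
        ring
      have e3 : ((k.factorial : ℝ) * P) ^ (s' + 1) ≤ (n.factorial : ℝ) ^ s' *
          ((k.factorial : ℝ) * P) := by
        rw [Real.rpow_add_one (ne_of_gt hPpos)]
        exact mul_le_mul_of_nonneg_right
          (Real.rpow_le_rpow (le_of_lt hPpos) c.fact_le hs'0) (le_of_lt hPpos)
      calc B₂ * A₂ ^ k * (k.factorial : ℝ) ^ (s' + 1) * (B₁ ^ k * A₁ ^ n * P ^ (s' + 1))
          = B₂ * (A₂ * B₁) ^ k * A₁ ^ n * ((k.factorial : ℝ) * P) ^ (s' + 1) := e2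
        _ ≤ B₂ * (A₂ * B₁) ^ k * A₁ ^ n * ((n.factorial : ℝ) ^ s' * ((k.factorial : ℝ) * P)) :=
            mul_le_mul_of_nonneg_left e3 (by positivity)
        _ = B₂ * A₁ ^ n * (n.factorial : ℝ) ^ s' *
            ((A₂ * B₁) ^ k * (k.factorial : ℝ) * P) := by ring
    -- assemble
    calc |iteratedDeriv n (f ∘ g) x| = ‖iteratedFDerivWithin ℝ n (f ∘ g) U x‖ := habs
      _ = ‖∑ c : OrderedFinpartition n,
            ((ftaylorSeriesWithin ℝ f V (g x)).compAlongOrderedFinpartition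
              (ftaylorSeriesWithin ℝ g U x) c)‖ := by rw [hrepr]
      _ ≤ ∑ c : OrderedFinpartition n,
            ‖(ftaylorSeriesWithin ℝ f V (g x)).compAlongOrderedFinpartition
              (ftaylorSeriesWithin ℝ g U x) c‖ := norm_sum_le _ _
      _ ≤ ∑ c : OrderedFinpartition n, B₂ * A₁ ^ n * (n.factorial : ℝ) ^ s' *
            ((A₂ * B₁) ^ c.length * (c.length.factorial : ℝ) *
              ∏ i, ((c.partSize i).factorial : ℝ)) :=
          Finset.sum_le_sum (fun c _ => hterm c)
      _ = B₂ * A₁ ^ n * (n.factorial : ℝ) ^ s' *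
            ∑ c : OrderedFinpartition n, ((A₂ * B₁) ^ c.length * (c.length.factorial : ℝ) *
              ∏ i, ((c.partSize i).factorial : ℝ)) := by rw [Finset.mul_sum]
      _ ≤ B₂ * A₁ ^ n * (n.factorial : ℝ) ^ s' *
            ((n.factorial : ℝ) * (A₂ * B₁ + 2) ^ n) :=
          mul_le_mul_of_nonneg_left (OrderedFinpartition.key_sum (by positivity) n)
            (by positivity)
      _ = B₂ * (A₁ * (A₂ * B₁ + 2)) ^ n * (n.factorial : ℝ) ^ (max C₁ C₂ + 1) := by
          rw [← hs', Real.rpow_add_one (by exact_mod_cast n.factorial_ne_zero), mul_pow]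
          ring
end

section
/- Let C ≥ 0, let U ⊆ (0,1) be open, and let f, g : U → ℝ both be C-mild. Then the product f · g : U → ℝ is C-mild. -/
open Real Set

lemma mild_term_le (C : ℝ) (hC : 0 ≤ C) {Af Ag Bf Bg : ℝ}
    (hAf : 0 < Af) (hAg : 0 < Ag) (hBf : 0 < Bf) (hBg : 0 < Bg)
    (n k : ℕ) (hk : k ≤ n) :
    (n.choose k : ℝ) * (Bf * Af ^ k * (k.factorial : ℝ) ^ (C + 1)) *
      (Bg * Ag ^ (n - k) * ((n - k).factorial : ℝ) ^ (C + 1)) ≤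
    Bf * Bg * (max Af Ag) ^ n * (n.factorial : ℝ) ^ (C + 1) := by
  set M := max Af Ag with hM
  have hMpos : 0 < M := lt_max_of_lt_left hAf
  have hch1 : (1 : ℝ) ≤ (n.choose k : ℝ) := by
    exact_mod_cast Nat.one_le_iff_ne_zero.mpr (Nat.choose_pos hk).ne'
  have hfac : ((k.factorial : ℝ) * ((n - k).factorial : ℝ)) * (n.choose k : ℝ)
      = (n.factorial : ℝ) := by
    have := Nat.choose_mul_factorial_mul_factorial hk
    push_cast [← this]
    ring
  have h1 : (n.choose k : ℝ) * ((k.factorial : ℝ) ^ (C + 1) *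
      ((n - k).factorial : ℝ) ^ (C + 1)) ≤ (n.factorial : ℝ) ^ (C + 1) := by
    have hk0 : (0 : ℝ) ≤ (k.factorial : ℝ) := by positivity
    have hk0' : (0 : ℝ) ≤ ((n - k).factorial : ℝ) := by positivity
    have h2 : (n.choose k : ℝ) ≤ (n.choose k : ℝ) ^ (C + 1) := by
      nth_rewrite 1 [← Real.rpow_one (n.choose k : ℝ)]
      exact Real.rpow_le_rpow_of_exponent_le hch1 (by linarith)
    calc (n.choose k : ℝ) * ((k.factorial : ℝ) ^ (C + 1) *
        ((n - k).factorial : ℝ) ^ (C + 1))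
        ≤ (n.choose k : ℝ) ^ (C + 1) * ((k.factorial : ℝ) ^ (C + 1) *
          ((n - k).factorial : ℝ) ^ (C + 1)) := by
          apply mul_le_mul_of_nonneg_right h2; positivity
      _ = (((k.factorial : ℝ) * ((n - k).factorial : ℝ)) * (n.choose k : ℝ)) ^ (C + 1) := by
          rw [Real.mul_rpow (by positivity) (by exact_mod_cast Nat.cast_nonneg _),
            Real.mul_rpow hk0 hk0']
          ring
      _ = (n.factorial : ℝ) ^ (C + 1) := by rw [hfac]
  have hA : Af ^ k * Ag ^ (n - k) ≤ M ^ n := by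
    calc Af ^ k * Ag ^ (n - k) ≤ M ^ k * M ^ (n - k) := by
          apply mul_le_mul (pow_le_pow_left₀ hAf.le (le_max_left _ _) _)
            (pow_le_pow_left₀ hAg.le (le_max_right _ _) _) (by positivity) (by positivity)
      _ = M ^ n := by rw [← pow_add, Nat.add_sub_cancel' hk]
  calc (n.choose k : ℝ) * (Bf * Af ^ k * (k.factorial : ℝ) ^ (C + 1)) *
      (Bg * Ag ^ (n - k) * ((n - k).factorial : ℝ) ^ (C + 1))
      = (Bf * Bg) * (Af ^ k * Ag ^ (n - k)) *
        ((n.choose k : ℝ) * ((k.factorial : ℝ) ^ (C + 1) *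
          ((n - k).factorial : ℝ) ^ (C + 1))) := by ring
    _ ≤ (Bf * Bg) * (M ^ n) * ((n.factorial : ℝ) ^ (C + 1)) := by
        apply mul_le_mul (mul_le_mul_of_nonneg_left hA (by positivity)) h1 ?_ (by positivity)
        positivity
    _ = Bf * Bg * M ^ n * (n.factorial : ℝ) ^ (C + 1) := by ring

theorem stmt3 (C : ℝ) (hC : 0 ≤ C) (U : Set ℝ) (hUo : IsOpen U) (hU : U ⊆ Ioo 0 1)
    (f g : ℝ → ℝ) (hf : IsCMild U f C) (hg : IsCMild U g C) :
    IsCMild U (fun x => f x * g x) C := by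
  obtain ⟨Af, Bf, hAf, hBf, hfc, hfb⟩ := hf
  obtain ⟨Ag, Bg, hAg, hBg, hgc, hgb⟩ := hg
  set M := max Af Ag with hM
  have hMpos : 0 < M := lt_max_of_lt_left hAf
  refine ⟨2 * M, Bf * Bg, by linarith, by positivity, hfc.mul hgc, ?_⟩
  intro x hx n
  have key : ∀ (h : ℝ → ℝ) (m : ℕ), |iteratedDeriv m h x| = ‖iteratedFDerivWithin ℝ m h U x‖ := by
    intro h m
    rw [← Real.norm_eq_abs, ← norm_iteratedFDeriv_eq_norm_iteratedDeriv,
      iteratedFDerivWithin_of_isOpen m hUo hx]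
  rw [key]
  calc ‖iteratedFDerivWithin ℝ n (fun x => f x * g x) U x‖
      ≤ ∑ k ∈ Finset.range (n + 1), (n.choose k : ℝ) *
        ‖iteratedFDerivWithin ℝ k f U x‖ * ‖iteratedFDerivWithin ℝ (n - k) g U x‖ :=
        norm_iteratedFDerivWithin_mul_le hfc hgc hUo.uniqueDiffOn hx (by exact_mod_cast le_top)
    _ ≤ ∑ k ∈ Finset.range (n + 1), Bf * Bg * M ^ n * (n.factorial : ℝ) ^ (C + 1) := by
        apply Finset.sum_le_sum
        intro k hk
        have hkn : k ≤ n := Nat.lt_succ_iff.mp (Finset.mem_range.mp hk)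
        have hfk : ‖iteratedFDerivWithin ℝ k f U x‖ ≤ Bf * Af ^ k * (k.factorial : ℝ) ^ (C + 1) := by
          rw [← key f k]; exact hfb x hx k
        have hgk : ‖iteratedFDerivWithin ℝ (n - k) g U x‖ ≤
            Bg * Ag ^ (n - k) * ((n - k).factorial : ℝ) ^ (C + 1) := by
          rw [← key g (n - k)]; exact hgb x hx (n - k)
        calc (n.choose k : ℝ) * ‖iteratedFDerivWithin ℝ k f U x‖ *
            ‖iteratedFDerivWithin ℝ (n - k) g U x‖
            ≤ (n.choose k : ℝ) * (Bf * Af ^ k * (k.factorial : ℝ) ^ (C + 1)) *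
              (Bg * Ag ^ (n - k) * ((n - k).factorial : ℝ) ^ (C + 1)) := by
              apply mul_le_mul (mul_le_mul_of_nonneg_left hfk (by positivity)) hgk
                (norm_nonneg _) (by positivity)
          _ ≤ Bf * Bg * M ^ n * (n.factorial : ℝ) ^ (C + 1) :=
              mild_term_le C hC hAf hAg hBf hBg n k hkn
    _ = (n + 1 : ℝ) * (Bf * Bg * M ^ n * (n.factorial : ℝ) ^ (C + 1)) := by
        rw [Finset.sum_const, Finset.card_range]; push_cast; ring
    _ ≤ (2 : ℝ) ^ n * (Bf * Bg * M ^ n * (n.factorial : ℝ) ^ (C + 1)) := by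
        apply mul_le_mul_of_nonneg_right ?_ (by positivity)
        exact_mod_cast Nat.succ_le_of_lt (Nat.lt_two_pow_self (n := n))
    _ = Bf * Bg * (2 * M) ^ n * (n.factorial : ℝ) ^ (C + 1) := by
        rw [mul_pow]; ring
end

section
/- Let A_f, B_f, A_g, B_g > 0 and define ψ(x) = B_f / (1 - A_f(x - B_g)) and φ(x) = B_g / (1 - A_g x). Then for every k ∈ ℕ one has ψ^{(k)}(B_g) = B_f A_f^k k! and φ^{(k)}(0) = B_g A_g^k k!, and for every n ≥ 1 one has (ψ ∘ φ)^{(n)}(0) = (A_f B_f B_g / (1 + A_f B_g)) · (A_g(1 + A_f B_g))^n · n!. -/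
/-!
Both ψ and φ are of the form `y ↦ c / (1 - a (y - b))`, whose k-th derivative is
`c aᵏ k! (1 - a (y - b))^(-1-k)` (the linear case of the iterated derivative of `x⁻¹`).
The composition of two Möbius maps is again one: near 0,
`ψ (φ x) = B_f / (1 + A_f B_g) + (A_f B_f B_g / (1 + A_f B_g)) / (1 - A_g (1 + A_f B_g) x)`,
and the constant term disappears from every derivative of positive order.
-/

open Filter Topology Nat

section MobiusIteratedDeriv

variable {𝕜 : Type*} [NontriviallyNormedField 𝕜]

/-- Valid at the pole too: there both sides are `0` (`c / 0 = 0`, `0 ^ (-1 - k) = 0`). -/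
theorem iteratedDeriv_div_one_sub_mul_sub (c a b x : 𝕜) (k : ℕ) :
    iteratedDeriv k (fun y => c / (1 - a * (y - b))) x =
      c * a ^ k * k ! * (1 - a * (x - b)) ^ (-1 - k : ℤ) := by
  have hlin : (fun y => c / (1 - a * (y - b))) = fun y => c * ((-a) * y + (1 + a * b))⁻¹ := by
    ext y; rw [div_eq_mul_inv]; ring_nf
  have hsign : (-1 : 𝕜) ^ k * (-a) ^ k = a ^ k := by rw [← mul_pow]; simp
  rw [hlin, iteratedDeriv_const_mul_field, iteratedDeriv_eq_iterate, iter_deriv_inv_linear]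
  beta_reduce
  rw [show -a * x + (1 + a * b) = 1 - a * (x - b) by ring]
  linear_combination (c * k ! * (1 - a * (x - b)) ^ (-1 - k : ℤ)) * hsign

theorem iteratedDeriv_div_one_sub_mul_sub_self (c a b : 𝕜) (k : ℕ) :
    iteratedDeriv k (fun y => c / (1 - a * (y - b))) b = c * a ^ k * k ! := by
  simp [iteratedDeriv_div_one_sub_mul_sub]

theorem div_one_sub_mul_div_one_sub_sub {c a b p x : 𝕜} (hab : 1 + a * b ≠ 0)
    (hx : 1 - p * x ≠ 0) (hx' : 1 - p * (1 + a * b) * x ≠ 0) :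
    c / (1 - a * (b / (1 - p * x) - b)) =
      c / (1 + a * b) + a * c * b / (1 + a * b) / (1 - p * (1 + a * b) * x) := by
  have hden : 1 - a * (b / (1 - p * x) - b) = (1 - p * (1 + a * b) * x) / (1 - p * x) := by
    field_simp; ring
  rw [hden]
  field_simp
  ring

theorem iteratedDeriv_comp_div_one_sub_mul {c a b p : 𝕜} (hab : 1 + a * b ≠ 0) {n : ℕ}
    (hn : 0 < n) :
    iteratedDeriv n ((fun x => c / (1 - a * (x - b))) ∘ (fun x => b / (1 - p * x))) 0 =
      a * c * b / (1 + a * b) * (p * (1 + a * b)) ^ n * n ! := by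
  have hne (q : 𝕜) : ∀ᶠ x in 𝓝 (0 : 𝕜), 1 - q * x ≠ 0 :=
    (continuous_const.sub (continuous_const.mul continuous_id)).continuousAt.eventually_ne
      (by simp)
  have hmobius : (fun x => c / (1 - a * (x - b))) ∘ (fun x => b / (1 - p * x)) =ᶠ[𝓝 0]
      fun x => c / (1 + a * b) + a * c * b / (1 + a * b) / (1 - p * (1 + a * b) * (x - 0)) := by
    filter_upwards [hne p, hne (p * (1 + a * b))] with x hx hx'
    simpa using div_one_sub_mul_div_one_sub_sub hab hx hx'
  rw [hmobius.iteratedDeriv_eq, iteratedDeriv_const_add hn,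
    iteratedDeriv_div_one_sub_mul_sub_self]

end MobiusIteratedDeriv

theorem stmt4_general (Af Bf Ag Bg : ℝ) (hAf : 0 < Af) (hBg : 0 < Bg) :
    (∀ k : ℕ,
      iteratedDeriv k (fun x : ℝ => Bf / (1 - Af * (x - Bg))) Bg = Bf * Af ^ k * k.factorial) ∧
    (∀ k : ℕ,
      iteratedDeriv k (fun x : ℝ => Bg / (1 - Ag * x)) 0 = Bg * Ag ^ k * k.factorial) ∧
    (∀ n : ℕ, 1 ≤ n →
      iteratedDeriv n
          ((fun x : ℝ => Bf / (1 - Af * (x - Bg))) ∘ (fun x : ℝ => Bg / (1 - Ag * x))) 0 =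
        (Af * Bf * Bg / (1 + Af * Bg)) * (Ag * (1 + Af * Bg)) ^ n * n.factorial) := by
  refine ⟨iteratedDeriv_div_one_sub_mul_sub_self Bf Af Bg, fun k => ?_, fun n hn => ?_⟩
  · simpa using iteratedDeriv_div_one_sub_mul_sub_self Bg Ag 0 k
  · exact iteratedDeriv_comp_div_one_sub_mul (by positivity) hn

theorem stmt4 (Af Bf Ag Bg : ℝ) (hAf : 0 < Af) (hBf : 0 < Bf) (hAg : 0 < Ag) (hBg : 0 < Bg) :
    (∀ k : ℕ,
      iteratedDeriv k (fun x : ℝ => Bf / (1 - Af * (x - Bg))) Bg = Bf * Af ^ k * k.factorial) ∧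
    (∀ k : ℕ,
      iteratedDeriv k (fun x : ℝ => Bg / (1 - Ag * x)) 0 = Bg * Ag ^ k * k.factorial) ∧
    (∀ n : ℕ, 1 ≤ n →
      iteratedDeriv n
          ((fun x : ℝ => Bf / (1 - Af * (x - Bg))) ∘ (fun x : ℝ => Bg / (1 - Ag * x))) 0 =
        (Af * Bf * Bg / (1 + Af * Bg)) * (Ag * (1 + Af * Bg)) ^ n * n.factorial) :=
  stmt4_general Af Bf Ag Bg hAf hBg
end

section
/- Let α ≥ 1 and n ∈ ℕ with n ≥ 1. Then for every x ∈ (0,1), one has x^{-n} exp(1 - (1/2) x^{-α}) ≤ e · (2/α)^{n/α} · (n!)^{1/α}. -/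
/-! With `t = x^{-α}` and `c = n/α` the left side is `e · t^c e^{-t/2}`. Raising
`s ≤ e^{s-1}` (at `s = t/(2c)`) to the power `c` bounds `t^c e^{-t/2}` by its maximum
`(2c)^c e^{-c} = (2/α)^c (n^n e^{-n})^{1/α}`, and `n^n e^{-n} ≤ n!` is one term of the
exponential series. -/

open Real Set

open scoped Nat

theorem rpow_mul_exp_neg_div_le {t b c : ℝ} (ht : 0 ≤ t) (hb : 0 < b) (hc : 0 ≤ c) :
    t ^ c * exp (-(t / b)) ≤ (b * c) ^ c * exp (-c) := by
  rcases hc.eq_or_lt with rfl | hc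
  · simpa using div_nonneg ht hb.le
  have hs : t / (b * c) ≤ exp (t / (b * c) - 1) := by
    linarith [add_one_le_exp (t / (b * c) - 1)]
  have hpow : t ^ c / (b * c) ^ c ≤ exp (t / b - c) := by
    calc t ^ c / (b * c) ^ c = (t / (b * c)) ^ c := (div_rpow ht (by positivity) c).symm
      _ ≤ exp (t / (b * c) - 1) ^ c := rpow_le_rpow (by positivity) hs hc.le
      _ = exp (t / b - c) := by rw [← exp_mul]; congr 1; field_simp
  rw [div_le_iff₀ (by positivity)] at hpow
  calc t ^ c * exp (-(t / b)) ≤ exp (t / b - c) * (b * c) ^ c * exp (-(t / b)) := by gcongr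
    _ = (b * c) ^ c * exp (-c) := by rw [mul_right_comm, ← exp_add]; ring_nf

theorem pow_mul_exp_neg_le_factorial (n : ℕ) : (n : ℝ) ^ n * exp (-n) ≤ n ! := by
  have h := pow_div_factorial_le_exp (x := n) n.cast_nonneg n
  rw [div_le_iff₀ (by positivity)] at h
  calc (n : ℝ) ^ n * exp (-n) ≤ exp n * n ! * exp (-n) := by gcongr
    _ = n ! := by rw [mul_right_comm, ← exp_add]; simp

theorem two_mul_div_rpow_mul_exp_neg_le (n : ℕ) {α : ℝ} (hα : 0 < α) :
    (2 * (n / α)) ^ ((n : ℝ) / α) * exp (-(n / α)) ≤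
      (2 / α) ^ ((n : ℝ) / α) * (n ! : ℝ) ^ (1 / α) := by
  have hn : (0 : ℝ) ≤ n := n.cast_nonneg
  have hsplit : (2 * (n / α)) ^ ((n : ℝ) / α) * exp (-(n / α)) =
      (2 / α) ^ ((n : ℝ) / α) * ((n : ℝ) ^ n * exp (-n)) ^ (1 / α) := by
    rw [mul_rpow (by positivity) (exp_pos _).le, ← exp_mul, ← rpow_natCast,
      ← rpow_mul hn, show 2 * ((n : ℝ) / α) = 2 / α * n by ring,
      mul_rpow (by positivity) hn]
    ring_nf
  rw [hsplit]
  gcongr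
  exact pow_mul_exp_neg_le_factorial n

theorem stmt10_general (α : ℝ) (hα : 1 ≤ α) (n : ℕ) (x : ℝ) (hx : x ∈ Ioo (0:ℝ) 1) :
    x ^ (-(n : ℝ)) * exp (1 - (1 / 2) * x ^ (-α)) ≤
      exp 1 * (2 / α) ^ ((n : ℝ) / α) * (n.factorial : ℝ) ^ (1 / α) := by
  obtain ⟨hx0, -⟩ := hx
  have hα0 : 0 < α := by linarith
  set t := x ^ (-α) with ht
  have hxt : x ^ (-(n : ℝ)) = t ^ ((n : ℝ) / α) := by
    rw [ht, ← rpow_mul hx0.le]; congr 1; field_simp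
  have hexp : exp (1 - (1 / 2) * t) = exp 1 * exp (-(t / 2)) := by
    rw [← exp_add]; ring_nf
  rw [hxt, hexp]
  calc t ^ ((n : ℝ) / α) * (exp 1 * exp (-(t / 2)))
      = exp 1 * (t ^ ((n : ℝ) / α) * exp (-(t / 2))) := by ring
    _ ≤ exp 1 * ((2 * (n / α)) ^ ((n : ℝ) / α) * exp (-(n / α))) := by
      gcongr exp 1 * ?_; exact rpow_mul_exp_neg_div_le (by positivity) two_pos (by positivity)
    _ ≤ exp 1 * ((2 / α) ^ ((n : ℝ) / α) * (n ! : ℝ) ^ (1 / α)) := by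
      gcongr exp 1 * ?_; exact two_mul_div_rpow_mul_exp_neg_le n hα0
    _ = exp 1 * (2 / α) ^ ((n : ℝ) / α) * (n ! : ℝ) ^ (1 / α) := by ring

theorem stmt10 (α : ℝ) (hα : 1 ≤ α) (n : ℕ) (hn : 1 ≤ n) (x : ℝ) (hx : x ∈ Ioo (0:ℝ) 1) :
    x ^ (-(n : ℝ)) * exp (1 - (1 / 2) * x ^ (-α)) ≤
      exp 1 * (2 / α) ^ ((n : ℝ) / α) * (n.factorial : ℝ) ^ (1 / α) :=
  stmt10_general α hα n x hx
end

section
/- Let α ≥ 1. The map P_α : (0,1) → (0,1) defined by P_α(x) = exp(1 - x^{-α}) is (6α, e, 1/α)-mild; that is, for every x ∈ (0,1) and every n ∈ ℕ, |P_α^{(n)}(x)| ≤ e · (6α)^n · (n!)^{1/α + 1}. -/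
open Real Set

section Aux

lemma cauchy_bound' {f : ℂ → ℂ} {c : ℂ} {R M : ℝ} (hR : 0 < R)
    (hf : DifferentiableOn ℂ f (Metric.closedBall c R))
    (hM : ∀ z ∈ Metric.sphere c R, ‖f z‖ ≤ M) (n : ℕ) :
    ‖iteratedDeriv n f c‖ ≤ n.factorial * M / R ^ n := by
  have hcont : Continuous fun θ : ℝ => ‖f (circleMap c R θ)‖ :=
    (hf.continuousOn.comp_continuous (continuous_circleMap c R)
      (fun θ => Metric.sphere_subset_closedBall (circleMap_mem_sphere c hR.le θ))).norm
  lift R to NNReal using hR.le with R' hR'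
  have hR0 : (0:NNReal) < R' := by exact_mod_cast hR
  have h1 : DiffContOnCl ℂ f (Metric.ball c R') := DifferentiableOn.diffContOnCl
    (by rwa [closure_ball c hR.ne'])
  have h2 := h1.hasFPowerSeriesOnBall hR0
  set p := cauchyPowerSeries f c R' with hp
  have h3 := h2.factorial_smul (1:ℂ) n
  have h4 : iteratedDeriv n f c = (n.factorial : ℂ) • (p n fun _ => 1) := by
    rw [iteratedDeriv_eq_iteratedFDeriv, ← h3, Nat.cast_smul_eq_nsmul ℂ]
  have h5 : ‖p n fun _ => (1:ℂ)‖ ≤ ‖p n‖ := by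
    simpa using (p n).le_opNorm (fun _ => (1:ℂ))
  have h6 : ‖p n‖ ≤ ((2 * π)⁻¹ * ∫ θ : ℝ in (0)..2 * π, ‖f (circleMap c R' θ)‖) * |(R':ℝ)|⁻¹ ^ n :=
    norm_cauchyPowerSeries_le f c R' n
  have h7 : (∫ θ : ℝ in (0)..2 * π, ‖f (circleMap c R' θ)‖) ≤ 2 * π * M := by
    calc (∫ θ : ℝ in (0)..2 * π, ‖f (circleMap c R' θ)‖)
        ≤ ∫ _ : ℝ in (0)..2 * π, M := by
          apply intervalIntegral.integral_mono_on Real.two_pi_pos.le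
            (hcont.intervalIntegrable _ _) intervalIntegrable_const
          exact fun θ _ => hM _ (circleMap_mem_sphere c hR.le θ)
      _ = 2 * π * M := by simp [mul_comm]
  calc ‖iteratedDeriv n f c‖ = n.factorial * ‖p n fun _ => (1:ℂ)‖ := by
        rw [h4, norm_smul]; simp
    _ ≤ n.factorial * (((2 * π)⁻¹ * ∫ θ : ℝ in (0)..2 * π, ‖f (circleMap c R' θ)‖) * |(R':ℝ)|⁻¹ ^ n) := by
        gcongr
        exact h5.trans h6
    _ ≤ n.factorial * ((2 * π)⁻¹ * (2 * π * M) * |(R':ℝ)|⁻¹ ^ n) := by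
        have : (0:ℝ) ≤ |(R':ℝ)|⁻¹ ^ n := by positivity
        gcongr
    _ = n.factorial * M / R' ^ n := by
        rw [abs_of_nonneg hR.le]
        rw [inv_mul_cancel_left₀ Real.two_pi_pos.ne']
        field_simp
        rw [one_div, inv_pow, mul_assoc, inv_mul_cancel₀ (pow_ne_zero _ hR.ne'), mul_one]

lemma rpow_mul_exp_le' {t s c : ℝ} (ht : 0 < t) (hs : 0 ≤ s) (hc : 0 < c) :
    t ^ s * Real.exp (-(c * t)) ≤ (s / (c * Real.exp 1)) ^ s := by
  rcases eq_or_lt_of_le hs with h | hs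
  · rw [← h, Real.rpow_zero, Real.rpow_zero, one_mul]
    exact Real.exp_le_one_iff.2 (by nlinarith)
  · rw [← Real.log_le_log_iff (by positivity) (by positivity), Real.log_mul (by positivity)
      (Real.exp_pos _).ne', Real.log_exp, Real.log_rpow ht, Real.log_rpow (by positivity)]
    have h1 : Real.log (c * t / s) ≤ c * t / s - 1 := Real.log_le_sub_one_of_pos (by positivity)
    have h2 : Real.log (c * t / s) = Real.log c + Real.log t - Real.log s := by
      rw [Real.log_div (by positivity) (by positivity), Real.log_mul hc.ne' ht.ne']
    have h3 : Real.log (s / (c * Real.exp 1)) = Real.log s - (Real.log c + 1) := by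
      rw [Real.log_div (by positivity) (by positivity), Real.log_mul hc.ne' (Real.exp_pos _).ne',
        Real.log_exp]
    rw [h2] at h1
    have h4 := mul_le_mul_of_nonneg_left h1 hs.le
    rw [h3]
    have hs' : s ≠ 0 := hs.ne'
    have : s * (c * t / s) = c * t := by field_simp
    nlinarith

lemma pow_le_exp_mul_factorial' (n : ℕ) :
    (n : ℝ) ^ n ≤ Real.exp 1 ^ n * n.factorial := by
  induction n with
  | zero => simp
  | succ n ih =>
    have aux : ((n : ℝ) + 1) ^ n ≤ Real.exp 1 * (n : ℝ) ^ n := by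
      rcases Nat.eq_zero_or_pos n with rfl | hn
      · simpa using Real.one_le_exp zero_le_one
      · have hn' : (0:ℝ) < n := by exact_mod_cast hn
        have h1 : (n : ℝ) + 1 ≤ n * Real.exp (1 / n) := by
          have := Real.add_one_le_exp (1 / (n:ℝ))
          calc (n:ℝ) + 1 = n * (1/n + 1) := by field_simp; ring
            _ ≤ n * Real.exp (1/n) := by nlinarith
        calc ((n : ℝ) + 1) ^ n ≤ ((n:ℝ) * Real.exp (1/n)) ^ n :=
              pow_le_pow_left₀ (by positivity) h1 n
          _ = (n:ℝ) ^ n * Real.exp ((1/n) * n) := by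
              rw [mul_pow, ← Real.exp_nat_mul]; ring_nf
          _ = Real.exp 1 * (n:ℝ) ^ n := by
              rw [one_div, inv_mul_cancel₀ hn'.ne']; ring
    push_cast
    calc ((n:ℝ) + 1) ^ (n + 1) = ((n:ℝ)+1) * ((n:ℝ)+1)^n := by ring
      _ ≤ ((n:ℝ)+1) * (Real.exp 1 * (n:ℝ)^n) := by
          have : (0:ℝ) ≤ (n:ℝ)+1 := by positivity
          exact mul_le_mul_of_nonneg_left aux this
      _ ≤ ((n:ℝ)+1) * (Real.exp 1 * (Real.exp 1 ^ n * n.factorial)) := by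
          have h := mul_le_mul_of_nonneg_left ih (Real.exp_pos 1).le
          have : (0:ℝ) ≤ (n:ℝ)+1 := by positivity
          exact mul_le_mul_of_nonneg_left h this
      _ = Real.exp 1 ^ (n+1) * (n+1).factorial := by
          rw [Nat.factorial_succ]; push_cast; ring

lemma re_cpow_lower' {α x : ℝ} (hα : 1 ≤ α) (hx : 0 < x) {z : ℂ}
    (hz : ‖z - x‖ ≤ x / (4 * α)) :
    2 / 3 * x ^ (-α) ≤ (z ^ (-(α:ℂ))).re := by
  have hα0 : (0:ℝ) < α := lt_of_lt_of_le one_pos hα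
  have hRx : x / (4 * α) ≤ x / 4 := by
    gcongr
    · linarith
  have hre : 3 * x / 4 ≤ z.re := by
    have h1 : |(z - (x:ℂ)).re| ≤ x / (4*α) := (Complex.abs_re_le_norm _).trans hz
    have h2 : (z - (x:ℂ)).re = z.re - x := by simp
    rw [h2] at h1
    have := abs_le.1 h1
    linarith [this.1, hRx]
  have hrepos : 0 < z.re := by linarith
  have hz0 : z ≠ 0 := by
    intro h
    rw [h] at hrepos; simp at hrepos
  have habs_pos : 0 < ‖z‖ := by
    have := Complex.re_le_norm z; linarith
  have habs_lb : 3 * x / 4 ≤ ‖z‖ := hre.trans (Complex.re_le_norm z)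
  have habs_ub : ‖z‖ ≤ x * (1 + 1 / (4*α)) := by
    have h1 : ‖z‖ ≤ ‖(x:ℂ)‖ + ‖z - x‖ := by
      simpa using norm_add_le (x:ℂ) (z - x)
    rw [Complex.norm_of_nonneg hx.le] at h1
    have : x * (1 + 1/(4*α)) = x + x/(4*α) := by field_simp
    linarith
  have him : |z.im| ≤ x / (4*α) := by
    have h1 : |(z - (x:ℂ)).im| ≤ x / (4*α) := (Complex.abs_im_le_norm _).trans hz
    simpa using h1
  set θ := Complex.arg z with hθdef
  have hθhalf : |θ| ≤ π / 2 := Complex.abs_arg_le_pi_div_two_iff.2 hrepos.le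
  have hsin : Real.sin θ = z.im / ‖z‖ := Complex.sin_arg z
  have hsinabs : |Real.sin θ| ≤ 1 / (3*α) := by
    rw [hsin, abs_div, abs_of_pos habs_pos]
    rw [div_le_div_iff₀ habs_pos (by positivity)]
    calc |z.im| * (3*α) ≤ (x/(4*α)) * (3*α) := by gcongr
      _ = 3*x/4 := by field_simp
      _ ≤ ‖z‖ := habs_lb
      _ = 1 * ‖z‖ := (one_mul _).symm
  have habssin : Real.sin |θ| = |Real.sin θ| := by
    rcases le_or_gt 0 θ with h | h
    · rw [abs_of_nonneg h, abs_of_nonneg (Real.sin_nonneg_of_nonneg_of_le_pi h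
        (le_trans (le_abs_self θ |>.trans hθhalf) (by linarith [Real.pi_pos])))]
    · rw [abs_of_neg h, Real.sin_neg, abs_of_nonpos ?_]
      exact Real.sin_nonpos_of_nonpos_of_neg_pi_le h.le
        (by have := neg_abs_le θ; have := hθhalf; linarith [Real.pi_pos])
  have hθbound : |θ| ≤ π / (6*α) := by
    have h1 : 2 / π * |θ| ≤ Real.sin |θ| :=
      Real.mul_le_sin (abs_nonneg θ) hθhalf
    rw [habssin] at h1
    have h2 : 2 / π * |θ| ≤ 1/(3*α) := h1.trans hsinabs
    have hπ : 0 < π := Real.pi_pos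
    rw [div_mul_eq_mul_div, div_le_div_iff₀ hπ (by positivity)] at h2
    rw [le_div_iff₀ (by positivity)]
    linarith
  have hαθ : |α * θ| ≤ π / 6 := by
    rw [abs_mul, abs_of_pos hα0]
    calc α * |θ| ≤ α * (π/(6*α)) := by gcongr
      _ = π/6 := by field_simp
  have hcos : (0.86:ℝ) ≤ Real.cos (α * θ) := by
    have h1 := Real.one_sub_sq_div_two_le_cos (x := α * θ)
    have h2 : (α*θ)^2 ≤ (π/6)^2 := by
      rw [← sq_abs]
      apply pow_le_pow_left₀ (abs_nonneg _) hαθ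
    have hπ : π ≤ 3.15 := by linarith [Real.pi_lt_d2]
    have hπ0 : 0 < π := Real.pi_pos
    nlinarith
  have hcpow : (z ^ (-(α:ℂ))).re = ‖z‖ ^ (-α) * Real.cos (α * θ) := by
    rw [Complex.cpow_def_of_ne_zero hz0]
    rw [Complex.exp_re]
    have hre' : (Complex.log z * -(α:ℂ)).re = Real.log ‖z‖ * (-α) := by
      simp [Complex.mul_re, Complex.log_re]
    have him' : (Complex.log z * -(α:ℂ)).im = θ * (-α) := by
      simp [Complex.mul_im, Complex.log_im, hθdef]
    rw [hre', him']
    rw [Real.rpow_def_of_pos habs_pos, show θ * -α = -(α*θ) by ring, Real.cos_neg]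
  rw [hcpow]
  have hbase : x ^ (-α) * Real.exp (-(1/4:ℝ)) ≤ ‖z‖ ^ (-α) := by
    have h1 : ‖z‖ ^ (-α) ≥ (x * (1 + 1/(4*α))) ^ (-α) :=
      Real.rpow_le_rpow_of_nonpos habs_pos habs_ub (by linarith)
    have h2 : (x * (1 + 1/(4*α))) ^ (-α) = x ^ (-α) * (1 + 1/(4*α)) ^ (-α) :=
      Real.mul_rpow hx.le (by positivity)
    have h3 : Real.exp (-(1/4:ℝ)) ≤ (1 + 1/(4*α)) ^ (-α) := by
      have hu : (0:ℝ) < 1 + 1/(4*α) := by positivity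
      rw [Real.rpow_neg hu.le, Real.exp_neg]
      apply inv_anti₀ (by positivity)
      have h4 : (1 + 1/(4*α)) ^ α ≤ (Real.exp (1/(4*α))) ^ α := by
        apply Real.rpow_le_rpow hu.le _ hα0.le
        linarith [Real.add_one_le_exp (1/(4*α))]
      have h5 : (Real.exp (1/(4*α))) ^ α = Real.exp (1/4) := by
        rw [← Real.exp_mul]
        congr 1
        field_simp
      exact h5 ▸ h4
    calc x ^ (-α) * Real.exp (-(1/4:ℝ)) ≤ x ^ (-α) * (1 + 1/(4*α)) ^ (-α) := by
          gcongr
      _ = (x * (1 + 1/(4*α))) ^ (-α) := h2.symm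
      _ ≤ ‖z‖ ^ (-α) := h1
  have hexp : (0.778:ℝ) ≤ Real.exp (-(1/4:ℝ)) := by
    have h6 : Real.exp (1/4:ℝ) ^ (4:ℕ) = Real.exp 1 := by
      rw [← Real.exp_nat_mul]; norm_num
    have h7 := Real.exp_one_lt_d9
    have h8 := Real.exp_pos (1/4:ℝ)
    have h9 : Real.exp (1/4:ℝ) ≤ 1.2853 := by
      nlinarith [sq_nonneg (Real.exp (1/4:ℝ) - 1.2853), sq_nonneg (Real.exp (1/4:ℝ) + 1.2853),
        sq_nonneg (Real.exp (1/4:ℝ))]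
    rw [Real.exp_neg]
    rw [le_inv_comm₀ (by norm_num) h8]
    linarith
  calc 2/3 * x^(-α) ≤ (x^(-α) * Real.exp (-(1/4:ℝ))) * (0.86) := by
        nlinarith [Real.rpow_nonneg hx.le (-α), hexp]
    _ ≤ ‖z‖^(-α) * Real.cos (α*θ) := by
        apply mul_le_mul hbase hcos (by norm_num) (Real.rpow_nonneg (norm_nonneg z) _)

noncomputable def Fc (α : ℝ) : ℂ → ℂ := fun z => Complex.exp (1 - z ^ (-(α:ℂ)))

lemma Fc_diffOn (α : ℝ) : DifferentiableOn ℂ (Fc α) {z : ℂ | 0 < z.re} := by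
  intro z hz
  have h1 : DifferentiableAt ℂ (fun w : ℂ => w ^ (-(α:ℂ))) z :=
    differentiableAt_id.cpow (differentiableAt_const _)
      (Complex.mem_slitPlane_iff.2 (Or.inl hz))
  exact (((differentiableAt_const (1:ℂ)).sub h1).cexp).differentiableWithinAt

lemma Fc_an (α : ℝ) (n : ℕ) :
    AnalyticOnNhd ℂ (iteratedDeriv n (Fc α)) {z : ℂ | 0 < z.re} := by
  induction n with
  | zero =>
    simpa [iteratedDeriv_zero] using
      (Fc_diffOn α).analyticOnNhd (isOpen_lt continuous_const Complex.continuous_re)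
  | succ n ih =>
    rw [iteratedDeriv_succ]
    exact ih.deriv

lemma transfer' (α : ℝ) (n : ℕ) :
    ∀ x : ℝ, 0 < x →
      iteratedDeriv n (fun y : ℝ => Real.exp (1 - y ^ (-α))) x
        = (iteratedDeriv n (Fc α) x).re := by
  induction n with
  | zero =>
    intro x hx
    simp only [iteratedDeriv_zero]
    have h1 : ((x:ℂ)) ^ (-(α:ℂ)) = ((x ^ (-α) : ℝ) : ℂ) := by
      rw [Complex.ofReal_cpow hx.le]
      push_cast
      rfl
    simp only [Fc, h1]
    rw [show (1 : ℂ) - ((x ^ (-α) : ℝ) : ℂ) = ((1 - x ^ (-α) : ℝ) : ℂ) by push_cast; ring,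
      ← Complex.ofReal_exp, Complex.ofReal_re]
  | succ n ih =>
    intro x hx
    rw [iteratedDeriv_succ, iteratedDeriv_succ]
    have hev : iteratedDeriv n (fun y : ℝ => Real.exp (1 - y ^ (-α)))
        =ᶠ[nhds x] fun y : ℝ => (iteratedDeriv n (Fc α) y).re := by
      filter_upwards [isOpen_Ioi.mem_nhds (show x ∈ Ioi (0:ℝ) from hx)] with y hy
      exact ih y hy
    rw [hev.deriv_eq]
    have hda : DifferentiableAt ℂ (iteratedDeriv n (Fc α)) (x:ℂ) :=
      (Fc_an α n (x:ℂ) (by simpa using hx)).differentiableAt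
    exact (hda.hasDerivAt.real_of_complex).deriv

lemma final_bound' {α x : ℝ} (hα : 1 ≤ α) (hx : 0 < x) (n : ℕ) :
    (n.factorial : ℝ) * Real.exp (1 - 2/3 * x ^ (-α)) / (x / (4*α)) ^ n
      ≤ Real.exp 1 * (6*α)^n * (n.factorial : ℝ) ^ (1/α + 1) := by
  have hα0 : (0:ℝ) < α := lt_of_lt_of_le one_pos hα
  set t := x ^ (-α) with htdef
  have ht : 0 < t := Real.rpow_pos_of_pos hx _
  set s := (n:ℝ)/α with hsdef
  have hs : 0 ≤ s := by positivity
  have hfac : (0:ℝ) < n.factorial := by exact_mod_cast n.factorial_pos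
  have h1 : t ^ s = (x^n)⁻¹ := by
    rw [htdef, ← Real.rpow_natCast x n, ← Real.rpow_neg hx.le, ← Real.rpow_mul hx.le]
    congr 1
    rw [hsdef]
    field_simp
  have h2 : t ^ s * Real.exp (-(2/3 * t)) ≤ (s / (2/3 * Real.exp 1)) ^ s :=
    rpow_mul_exp_le' ht hs (by norm_num)
  have h3 : s / (2/3 * Real.exp 1) = (3/(2*α)) * ((n:ℝ)/Real.exp 1) := by
    rw [hsdef]
    field_simp
  have h4 : ((3/(2*α)) * ((n:ℝ)/Real.exp 1)) ^ s
      = (3/(2*α))^s * ((n:ℝ)/Real.exp 1)^s :=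
    Real.mul_rpow (by positivity) (by positivity)
  have h5 : (3/(2*α):ℝ)^s ≤ (3/2:ℝ)^n := by
    rcases le_total (3/(2*α):ℝ) 1 with h | h
    · exact (Real.rpow_le_one (by positivity) h hs).trans (one_le_pow₀ (by norm_num))
    · calc (3/(2*α):ℝ)^s ≤ (3/2:ℝ)^s := by
            apply Real.rpow_le_rpow (by positivity) _ hs
            rw [div_le_div_iff₀ (by positivity) (by norm_num)]
            nlinarith
        _ ≤ (3/2:ℝ)^((n:ℝ)) := Real.rpow_le_rpow_of_exponent_le (by norm_num)
            (by rw [hsdef]; exact div_le_self (by positivity) hα)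
        _ = (3/2:ℝ)^n := Real.rpow_natCast _ n
  have h6 : ((n:ℝ)/Real.exp 1)^s ≤ (n.factorial:ℝ)^(1/α) := by
    have he : ((n:ℝ)/Real.exp 1) ^ s = (((n:ℝ)/Real.exp 1) ^ (n:ℕ)) ^ (1/α:ℝ) := by
      rw [← Real.rpow_natCast ((n:ℝ)/Real.exp 1) n, ← Real.rpow_mul (by positivity)]
      congr 1
      rw [hsdef]; field_simp
    rw [he]
    apply Real.rpow_le_rpow (by positivity) _ (by positivity)
    rw [div_pow, div_le_iff₀ (by positivity)]
    exact (pow_le_exp_mul_factorial' n).trans (le_of_eq (mul_comm _ _))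
  have key : Real.exp (-(2/3 * t)) ≤ (3/2:ℝ)^n * (n.factorial:ℝ)^(1/α) * x^n := by
    have hxn : (0:ℝ) < x^n := by positivity
    have e1 : Real.exp (-(2/3 * t)) = x^n * (t^s * Real.exp (-(2/3 * t))) := by
      rw [h1]; field_simp
    rw [e1]
    calc x^n * (t^s * Real.exp (-(2/3 * t)))
        ≤ x^n * ((3/2:ℝ)^n * (n.factorial:ℝ)^(1/α)) := by
          apply mul_le_mul_of_nonneg_left _ hxn.le
          calc t^s * Real.exp (-(2/3 * t)) ≤ (s / (2/3 * Real.exp 1)) ^ s := h2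
            _ = (3/(2*α))^s * ((n:ℝ)/Real.exp 1)^s := by rw [h3, h4]
            _ ≤ (3/2:ℝ)^n * (n.factorial:ℝ)^(1/α) :=
                mul_le_mul h5 h6 (Real.rpow_nonneg (by positivity) _) (by positivity)
      _ = (3/2:ℝ)^n * (n.factorial:ℝ)^(1/α) * x^n := by ring
  have hM : Real.exp (1 - 2/3 * t) = Real.exp 1 * Real.exp (-(2/3 * t)) := by
    rw [← Real.exp_add]; ring_nf
  have hRn : (0:ℝ) < (x/(4*α))^n := by positivity
  rw [div_le_iff₀ hRn]
  have hpow : ((6:ℝ)*α)^n = (3/2:ℝ)^n * (4*α)^n := by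
    rw [← mul_pow]
    congr 1
    ring
  have hrfac : (n.factorial:ℝ)^(1/α + 1) = (n.factorial:ℝ)^(1/α) * n.factorial := by
    rw [Real.rpow_add hfac, Real.rpow_one]
  calc (n.factorial : ℝ) * Real.exp (1 - 2/3 * t)
      = Real.exp 1 * (n.factorial : ℝ) * Real.exp (-(2/3 * t)) := by rw [hM]; ring
    _ ≤ Real.exp 1 * (n.factorial : ℝ) * ((3/2:ℝ)^n * (n.factorial:ℝ)^(1/α) * x^n) := by
        have : (0:ℝ) ≤ Real.exp 1 * (n.factorial : ℝ) := by positivity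
        exact mul_le_mul_of_nonneg_left key this
    _ = Real.exp 1 * (6*α)^n * (n.factorial : ℝ) ^ (1/α + 1) * (x/(4*α))^n := by
        rw [hrfac, hpow, div_pow]
        have h4an : ((4:ℝ)*α)^n ≠ 0 := by positivity
        field_simp
        ring_nf
        rw [mul_assoc (x ^ n), ← mul_pow α, mul_inv_cancel₀ hα0.ne', one_pow, mul_one, mul_assoc,
          ← mul_pow]
        norm_num

end Aux

theorem stmt11 (α : ℝ) (hα : 1 ≤ α) :
    IsMild (Ioo 0 1) (fun x : ℝ => exp (1 - x ^ (-α))) (6 * α) (exp 1) (1 / α) := by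
  have hα0 : (0:ℝ) < α := lt_of_lt_of_le one_pos hα
  constructor
  · -- smoothness
    intro x hx
    have hxpos : 0 < x := hx.1
    have hF : AnalyticAt ℂ (Fc α) (x:ℂ) := by
      have := Fc_an α 0 (x:ℂ) (by simpa using hxpos)
      simpa [iteratedDeriv_zero] using this
    have hcomp : AnalyticAt ℝ (fun y : ℝ => (Fc α (y:ℂ)).re) x := by
      have h1 : AnalyticAt ℝ (fun y : ℝ => Fc α (y:ℂ)) x :=
        hF.restrictScalars.comp (Complex.ofRealCLM.analyticAt x)
      exact (Complex.reCLM.analyticAt _).comp h1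
    have heq : (fun y : ℝ => (Fc α (y:ℂ)).re)
        =ᶠ[nhds x] (fun y : ℝ => exp (1 - y ^ (-α))) := by
      filter_upwards [isOpen_Ioi.mem_nhds (show x ∈ Ioi (0:ℝ) from hxpos)] with y hy
      exact (transfer' α 0 y hy).symm ▸ by
        simpa [iteratedDeriv_zero] using (transfer' α 0 y hy).symm
    exact ((hcomp.congr heq).contDiffAt).contDiffWithinAt
  · -- the derivative bounds
    intro x hx n
    have hxpos : 0 < x := hx.1
    set R := x / (4*α) with hRdef
    have hR : 0 < R := by positivity
    have hsub : Metric.closedBall (x:ℂ) R ⊆ {z : ℂ | 0 < z.re} := by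
      intro z hz
      rw [Metric.mem_closedBall, Complex.dist_eq] at hz
      have h1 : |(z - (x:ℂ)).re| ≤ R := (Complex.abs_re_le_norm _).trans hz
      have h2 : (z - (x:ℂ)).re = z.re - x := by simp
      rw [h2] at h1
      have h3 := (abs_le.1 h1).1
      have hRx : R ≤ x / 4 := by
        rw [hRdef]
        gcongr
        · linarith
      show 0 < z.re
      linarith
    have hdiff : DifferentiableOn ℂ (Fc α) (Metric.closedBall (x:ℂ) R) :=
      (Fc_diffOn α).mono hsub
    have hMb : ∀ z ∈ Metric.sphere (x:ℂ) R, ‖Fc α z‖ ≤ Real.exp (1 - 2/3 * x ^ (-α)) := by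
      intro z hz
      rw [Metric.mem_sphere, Complex.dist_eq] at hz
      have hzb : ‖z - x‖ ≤ x / (4*α) := le_of_eq hz
      have hre := re_cpow_lower' hα hxpos hzb
      rw [show ‖Fc α z‖ = Real.exp ((1 - z ^ (-(α:ℂ))).re) by
        rw [Fc, Complex.norm_exp]]
      apply Real.exp_le_exp.2
      have : (1 - z ^ (-(α:ℂ))).re = 1 - (z ^ (-(α:ℂ))).re := by simp
      rw [this]
      linarith
    have hcauchy := cauchy_bound' hR hdiff hMb n
    have htrans := transfer' α n x hxpos
    calc |iteratedDeriv n (fun y : ℝ => exp (1 - y ^ (-α))) x|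
        = |(iteratedDeriv n (Fc α) (x:ℂ)).re| := by rw [htrans]
      _ ≤ ‖iteratedDeriv n (Fc α) (x:ℂ)‖ := Complex.abs_re_le_norm _
      _ ≤ n.factorial * Real.exp (1 - 2/3 * x ^ (-α)) / R ^ n := by
          exact hcauchy
      _ ≤ Real.exp 1 * (6*α)^n * (n.factorial : ℝ) ^ (1/α + 1) := final_bound' hα hxpos n
end

section
/- Let α ≥ 1. There exist A, B > 0 (depending only on α) such that for every ε ∈ (0,1), the function h_ε : (ε, 1) → ℝ defined by h_ε(x) = exp(2(1 - ε^{-α}) - (1 - x^{-α})) is (A, B, 1/α)-mild; that is, for every x ∈ (ε,1) and every n ∈ ℕ, |h_ε^{(n)}(x)| ≤ B A^n (n!)^{1/α + 1}. -/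
open Real Set

section Aux

open Complex Metric Real in
lemma my_cauchy_bound {f : ℂ → ℂ} {c : ℂ} {R M : ℝ} (hR : 0 < R)
    (hd : DifferentiableOn ℂ f (closedBall c R))
    (hM : ∀ z ∈ sphere c R, ‖f z‖ ≤ M) (n : ℕ) :
    ‖iteratedDeriv n f c‖ ≤ n.factorial * M / R ^ n := by
  lift R to NNReal using hR.le with R
  have hR' : 0 < R := by exact_mod_cast hR
  have hdc : DiffContOnCl ℂ f (ball c R) :=
    ⟨hd.mono ball_subset_closedBall, hd.continuousOn.mono (closure_ball_subset_closedBall)⟩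
  have hp := hdc.hasFPowerSeriesOnBall hR'
  have h1 : iteratedDeriv n f c = n.factorial • ((cauchyPowerSeries f c R n) fun _ => (1:ℂ)) := by
    rw [iteratedDeriv_eq_iteratedFDeriv, hp.factorial_smul 1 n]
  have hMnn : 0 ≤ M :=
    le_trans (norm_nonneg _) (hM _ (circleMap_mem_sphere c hR.le 0))
  have hcont : ContinuousOn f (closedBall c (R:ℝ)) := hd.continuousOn
  have hcm : Continuous fun θ : ℝ => ‖f (circleMap c R θ)‖ := by
    refine (hcont.comp_continuous (continuous_circleMap c R) ?_).norm
    exact fun θ => sphere_subset_closedBall (circleMap_mem_sphere c hR.le θ)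
  have hint : (∫ θ : ℝ in (0)..2 * π, ‖f (circleMap c R θ)‖) ≤ 2 * π * M := by
    have := intervalIntegral.integral_mono_on (μ := MeasureTheory.volume) (a := 0) (b := 2 * π)
      (f := fun θ : ℝ => ‖f (circleMap c R θ)‖) (g := fun _ : ℝ => M) Real.two_pi_pos.le
      (hcm.intervalIntegrable 0 (2 * π)) intervalIntegrable_const
      (fun θ _ => hM _ (circleMap_mem_sphere c hR.le θ))
    simpa [mul_comm] using this
  have h3 := norm_cauchyPowerSeries_le f c R n
  have h2 : ‖(cauchyPowerSeries f c R n) fun _ => (1:ℂ)‖ ≤ ‖cauchyPowerSeries f c (R:ℝ) n‖ := by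
    simpa using (cauchyPowerSeries f c (R:ℝ) n).le_opNorm fun _ => (1:ℂ)
  have hfrac : ((2 * π)⁻¹ * ∫ θ : ℝ in (0)..2 * π, ‖f (circleMap c R θ)‖) ≤ M := by
    rw [inv_mul_le_iff₀ Real.two_pi_pos]
    linarith [hint]
  have h4 : ((2 * π)⁻¹ * ∫ θ : ℝ in (0)..2 * π, ‖f (circleMap c R θ)‖) * |(R:ℝ)|⁻¹ ^ n
      ≤ M / R ^ n := by
    rw [_root_.abs_of_nonneg hR.le, div_eq_mul_inv, ← inv_pow]
    have hnn : (0:ℝ) ≤ ((R:ℝ)⁻¹) ^ n := by positivity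
    exact mul_le_mul_of_nonneg_right hfrac hnn
  calc ‖iteratedDeriv n f c‖ = (n.factorial : ℝ) * ‖(cauchyPowerSeries f c R n) fun _ => (1:ℂ)‖ := by
        rw [h1, nsmul_eq_mul, norm_mul]; simp
    _ ≤ (n.factorial : ℝ) * (M / R ^ n) := by
        refine mul_le_mul_of_nonneg_left ((h2.trans h3).trans h4) (by positivity)
    _ = n.factorial * M / R ^ n := by ring

lemma my_analytic_iter {H : ℂ → ℂ} (hH : DifferentiableOn ℂ H Complex.slitPlane) (n : ℕ) :
    AnalyticOnNhd ℂ (iteratedDeriv n H) Complex.slitPlane := by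
  induction n with
  | zero => simpa [iteratedDeriv_zero] using hH.analyticOnNhd Complex.isOpen_slitPlane
  | succ n ih => rw [iteratedDeriv_succ]; exact ih.deriv

lemma my_transfer {H : ℂ → ℂ} {h : ℝ → ℝ} {s : Set ℝ}
    (hs : IsOpen s) (hH : DifferentiableOn ℂ H Complex.slitPlane)
    (hsub : ∀ x ∈ s, (x:ℂ) ∈ Complex.slitPlane)
    (heq : ∀ x ∈ s, H x = (h x : ℂ)) (n : ℕ) :
    ∀ x ∈ s, iteratedDeriv n h x = (iteratedDeriv n H x).re := by
  induction n with
  | zero => intro x hx; simp [heq x hx]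
  | succ n ih =>
    intro x hx
    have hA := my_analytic_iter hH n
    have hG : HasDerivAt (iteratedDeriv n H) (iteratedDeriv (n+1) H x) x := by
      rw [iteratedDeriv_succ]
      exact (hA x (hsub x hx)).differentiableAt.hasDerivAt
    have hcomp : HasDerivAt (fun y : ℝ => iteratedDeriv n H ↑y) (iteratedDeriv (n+1) H ↑x) x :=
      hG.comp_ofReal
    have hre : HasDerivAt (fun y : ℝ => (iteratedDeriv n H ↑y).re)
        ((iteratedDeriv (n+1) H ↑x).re) x := by
      have := (Complex.reCLM.hasFDerivAt.comp x hcomp.hasFDerivAt).hasDerivAt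
      exact Complex.reCLM.hasFDerivAt.comp_hasDerivAt x hcomp
    have heqn : Set.EqOn (iteratedDeriv n h) (fun y => (iteratedDeriv n H ↑y).re) s :=
      fun y hy => ih y hy
    rw [iteratedDeriv_succ, Filter.EventuallyEq.deriv_eq
      (heqn.eventuallyEq_of_mem (hs.mem_nhds hx))]
    exact hre.deriv
open Real

lemma my_sup_bound {m t : ℝ} (hm : 0 ≤ m) (ht : 0 ≤ t) :
    t ^ m * Real.exp (-t) ≤ m ^ m := by
  rcases eq_or_lt_of_le hm with hm0 | hm'
  · rw [← hm0, rpow_zero, rpow_zero, one_mul]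
    exact exp_le_one_iff.mpr (by linarith)
  rcases eq_or_lt_of_le ht with ht0 | ht'
  · rw [← ht0, zero_rpow hm'.ne', zero_mul]
    positivity
  have key : t / m ≤ Real.exp (t / m - 1) := by
    have := Real.add_one_le_exp (t / m - 1); linarith
  have h1 : (t / m) ^ m ≤ (Real.exp (t / m - 1)) ^ m :=
    Real.rpow_le_rpow (by positivity) key hm
  rw [Real.div_rpow ht hm, Real.rpow_def_of_pos (Real.exp_pos _), Real.log_exp] at h1
  have h2 : t ^ m ≤ m ^ m * Real.exp ((t / m - 1) * m) := by
    rw [div_le_iff₀ (by positivity : (0:ℝ) < m ^ m)] at h1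
    linarith [h1]
  have h3 : (t / m - 1) * m = t - m := by field_simp
  rw [h3] at h2
  calc t ^ m * Real.exp (-t) ≤ m ^ m * Real.exp (t - m) * Real.exp (-t) := by
        exact mul_le_mul_of_nonneg_right h2 (Real.exp_pos _).le
    _ = m ^ m * Real.exp (-m) := by rw [mul_assoc, ← Real.exp_add]; ring_nf
    _ ≤ m ^ m * 1 := by
        refine mul_le_mul_of_nonneg_left (exp_le_one_iff.mpr (by linarith)) (by positivity)
    _ = m ^ m := mul_one _

lemma my_key_bound {α : ℝ} (hα : 1 ≤ α) (n : ℕ) {x : ℝ} (hx0 : 0 < x) :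
    Real.exp (-(x ^ (-α)) / 2) / x ^ n ≤ (2 * Real.exp 1) ^ n * (n.factorial : ℝ) ^ (α⁻¹) := by
  have hα0 : 0 < α := lt_of_lt_of_le one_pos hα
  set t : ℝ := x ^ (-α) with htdef
  have ht0 : 0 < t := Real.rpow_pos_of_pos hx0 _
  set m : ℝ := n / α with hmdef
  have hm0 : 0 ≤ m := by positivity
  -- x ^ n = (t ^ m)⁻¹ … i.e. 1 / x ^ n = t ^ m
  have hxn : (x ^ n : ℝ)⁻¹ = t ^ m := by
    rw [htdef, ← Real.rpow_natCast x n, ← Real.rpow_neg hx0.le, hmdef,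
      ← Real.rpow_mul hx0.le]
    congr 1
    field_simp
  have step1 : Real.exp (-t / 2) / x ^ n = (t / 2) ^ m * Real.exp (-(t/2)) * 2 ^ m := by
    rw [div_eq_mul_inv, hxn, Real.div_rpow ht0.le (by norm_num : (0:ℝ) ≤ 2)]
    have h2 : (2:ℝ) ^ m ≠ 0 := by positivity
    field_simp
  have step2 : (t / 2) ^ m * Real.exp (-(t/2)) ≤ m ^ m := my_sup_bound hm0 (by positivity)
  -- m ^ m ≤ (exp 1) ^ n * (n!) ^ α⁻¹
  have hmn : m ≤ (n : ℝ) := by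
    rw [hmdef, div_le_iff₀ hα0]
    nlinarith [Nat.cast_nonneg (α := ℝ) n]
  have step3 : m ^ m ≤ ((n:ℝ) ^ (n:ℝ)) ^ (α⁻¹) := by
    calc m ^ m ≤ (n:ℝ) ^ m := Real.rpow_le_rpow hm0 hmn hm0
      _ = ((n:ℝ) ^ (n:ℝ)) ^ (α⁻¹) := by
          rw [← Real.rpow_mul (Nat.cast_nonneg n)]
          congr 1
  have step4 : ((n:ℝ) ^ (n:ℝ)) ^ (α⁻¹) ≤ (Real.exp 1) ^ n * (n.factorial : ℝ) ^ (α⁻¹) := by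
    have hnn : (n:ℝ) ^ (n:ℝ) ≤ Real.exp n * n.factorial := by
      have := Real.pow_div_factorial_le_exp (n : ℝ) (Nat.cast_nonneg n) n
      rw [div_le_iff₀ (by positivity : (0:ℝ) < (n.factorial : ℝ))] at this
      rw [Real.rpow_natCast]
      linarith
    calc ((n:ℝ) ^ (n:ℝ)) ^ (α⁻¹) ≤ (Real.exp n * n.factorial) ^ (α⁻¹) :=
          Real.rpow_le_rpow (Real.rpow_nonneg (Nat.cast_nonneg n) _) hnn (by positivity)
      _ = (Real.exp n) ^ (α⁻¹) * (n.factorial : ℝ) ^ (α⁻¹) :=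
          Real.mul_rpow (Real.exp_pos _).le (Nat.cast_nonneg _)
      _ ≤ (Real.exp 1) ^ n * (n.factorial : ℝ) ^ (α⁻¹) := by
          refine mul_le_mul_of_nonneg_right ?_ (by positivity)
          rw [Real.rpow_def_of_pos (Real.exp_pos _), Real.log_exp, Real.exp_one_pow]
          refine Real.exp_le_exp.mpr ?_
          calc (n:ℝ) * α⁻¹ ≤ (n:ℝ) * 1 := by
                refine mul_le_mul_of_nonneg_left ?_ (Nat.cast_nonneg n)
                rw [inv_le_one_iff₀]; right; exact hα
            _ = n := mul_one _
  have h2m : (2:ℝ) ^ m ≤ 2 ^ n := by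
    calc (2:ℝ) ^ m ≤ 2 ^ (n:ℝ) := Real.rpow_le_rpow_of_exponent_le one_le_two hmn
      _ = 2 ^ n := Real.rpow_natCast 2 n
  calc Real.exp (-t / 2) / x ^ n = (t / 2) ^ m * Real.exp (-(t/2)) * 2 ^ m := step1
    _ ≤ m ^ m * 2 ^ n := by
        refine mul_le_mul step2 h2m (by positivity) (by positivity)
    _ ≤ (Real.exp 1) ^ n * (n.factorial : ℝ) ^ (α⁻¹) * 2 ^ n := by
        refine mul_le_mul_of_nonneg_right (step3.trans step4) (by positivity)
    _ = (2 * Real.exp 1) ^ n * (n.factorial : ℝ) ^ (α⁻¹) := by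
        rw [mul_pow]; ring

end Aux

theorem stmt14 (α : ℝ) (hα : 1 ≤ α) :
    ∃ A B : ℝ, 0 < A ∧ 0 < B ∧ ∀ ε ∈ Ioo (0:ℝ) 1,
      IsMild (Ioo ε 1) (fun x : ℝ => exp (2 * (1 - ε ^ (-α)) - (1 - x ^ (-α)))) A B
        (1 / α) := by
  have hα0 : 0 < α := lt_of_lt_of_le one_pos hα
  set δ : ℝ := 1 - (2/3 : ℝ) ^ (α⁻¹) with hδdef
  have h23pos : (0:ℝ) < (2/3 : ℝ) ^ (α⁻¹) := Real.rpow_pos_of_pos (by norm_num) _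
  have h23lt : (2/3 : ℝ) ^ (α⁻¹) < 1 :=
    Real.rpow_lt_one (by norm_num) (by norm_num) (by positivity)
  have hδpos : 0 < δ := by simp only [hδdef]; linarith
  have hδlt : δ < 1 := by simp only [hδdef]; linarith
  have h1δ : 1 - δ = (2/3 : ℝ) ^ (α⁻¹) := by simp [hδdef]
  have h1δpos : (0:ℝ) < 1 - δ := by rw [h1δ]; exact h23pos
  have hpow : ((1:ℝ) - δ) ^ (-α) = 3/2 := by
    rw [h1δ, ← Real.rpow_mul (by norm_num : (0:ℝ) ≤ 2/3)]
    have hm1 : α⁻¹ * -α = -1 := by field_simp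
    rw [hm1, Real.rpow_neg_one]
    norm_num
  refine ⟨2 * Real.exp 1 / δ, Real.exp 1, by positivity, Real.exp_pos 1, ?_⟩
  rintro ε ⟨hε0, hε1⟩
  set c' : ℝ := 2 * (1 - ε ^ (-α)) - 1 with hc'
  set H : ℂ → ℂ := fun z => Complex.exp ((c' : ℂ) + z ^ (((-α : ℝ)) : ℂ)) with hHdef
  have hHdiff : DifferentiableOn ℂ H Complex.slitPlane := by
    intro z hz
    refine DifferentiableAt.differentiableWithinAt ?_
    exact ((differentiableAt_const _).add
      ((differentiableAt_id.cpow (differentiableAt_const _) hz))).cexp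
  have heq : ∀ x ∈ Ioo ε 1, H x = ((Real.exp (2 * (1 - ε ^ (-α)) - (1 - x ^ (-α))) : ℝ) : ℂ) := by
    intro x hx
    have hx0 : 0 < x := lt_trans hε0 hx.1
    have harg : (c' : ℂ) + (x:ℂ) ^ (((-α : ℝ)) : ℂ)
        = ((2 * (1 - ε ^ (-α)) - (1 - x ^ (-α)) : ℝ) : ℂ) := by
      rw [← Complex.ofReal_cpow hx0.le]
      push_cast [hc']
      ring
    simp only [hHdef, harg, Complex.ofReal_exp]
  have hsub : ∀ x ∈ Ioo ε 1, (x:ℂ) ∈ Complex.slitPlane := by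
    intro x hx
    exact Complex.ofReal_mem_slitPlane.mpr (lt_trans hε0 hx.1)
  constructor
  · -- smoothness
    intro y hy
    have hy0 : y ≠ 0 := ne_of_gt (lt_trans hε0 hy.1)
    refine ContDiffAt.contDiffWithinAt ?_
    exact Real.contDiff_exp.contDiffAt.comp y
      (contDiffAt_const.sub (contDiffAt_const.sub (Real.contDiffAt_rpow_const_of_ne hy0)))
  · intro x hx n
    obtain ⟨hxε, hx1⟩ := hx
    have hx0 : 0 < x := lt_trans hε0 hxε
    -- geometry of the closed ball
    have hRpos : 0 < δ * x := by positivity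
    have hclose : Metric.closedBall (↑x : ℂ) (δ * x) ⊆ Complex.slitPlane := by
      intro z hz
      rw [Metric.mem_closedBall, Complex.dist_eq] at hz
      have hre := Complex.abs_re_le_norm (z - ↑x)
      have h1 : |(z - ↑x).re| ≤ δ * x := le_trans hre hz
      have h2 := abs_le.mp h1
      have : 0 < z.re := by
        have : (z - ↑x).re = z.re - x := by simp [Complex.sub_re]
        rw [this] at h2
        nlinarith [h2.1, h1δpos]
      exact Or.inl this
    -- bound on the sphere
    have hxa : (0:ℝ) < x ^ (-α) := Real.rpow_pos_of_pos hx0 _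
    have hεx : x ^ (-α) ≤ ε ^ (-α) :=
      Real.rpow_le_rpow_of_nonpos hε0 hxε.le (by linarith)
    have hsphere : ∀ z ∈ Metric.sphere (↑x : ℂ) (δ * x),
        ‖H z‖ ≤ Real.exp (1 - x ^ (-α) / 2) := by
      intro z hz
      rw [Metric.mem_sphere, Complex.dist_eq] at hz
      have habsz : (1 - δ) * x ≤ ‖z‖ := by
        have h1 := norm_sub_norm_le (↑x : ℂ) z
        rw [norm_sub_rev] at h1
        have h2 : ‖z - (↑x:ℂ)‖ = δ * x := by rw [hz]
        have h3 : ‖(↑x:ℂ)‖ = x := by simp [abs_of_pos hx0]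
        rw [h2, h3] at h1
        nlinarith [h1]
      have hz0 : z ≠ 0 := by
        intro h
        rw [h] at habsz
        simp at habsz
        nlinarith
      have hrebound : (z ^ (((-α : ℝ)) : ℂ)).re ≤ (3/2) * x ^ (-α) := by
        have h1 : (z ^ (((-α : ℝ)) : ℂ)).re ≤ ‖z ^ (((-α : ℝ)) : ℂ)‖ :=
          le_trans (le_abs_self _) (Complex.abs_re_le_norm _)
        have h2 : ‖z ^ (((-α : ℝ)) : ℂ)‖ = ‖z‖ ^ (-α) := by
          rw [Complex.norm_cpow_of_ne_zero hz0]
          simp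
        have h3 : ‖z‖ ^ (-α) ≤ ((1 - δ) * x) ^ (-α) :=
          Real.rpow_le_rpow_of_nonpos (by positivity) habsz (by linarith)
        have h4 : ((1 - δ) * x) ^ (-α) = (3/2) * x ^ (-α) := by
          rw [Real.mul_rpow h1δpos.le hx0.le, hpow]
        calc (z ^ (((-α : ℝ)) : ℂ)).re ≤ ‖z ^ (((-α : ℝ)) : ℂ)‖ := h1
          _ = ‖z‖ ^ (-α) := h2
          _ ≤ ((1 - δ) * x) ^ (-α) := h3
          _ = (3/2) * x ^ (-α) := h4
      have hnorm : ‖H z‖ = Real.exp (c' + (z ^ (((-α : ℝ)) : ℂ)).re) := by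
        simp only [hHdef]
        rw [Complex.norm_exp]
        congr 1
      rw [hnorm]
      refine Real.exp_le_exp.mpr ?_
      simp only [hc']
      linarith [hrebound, hεx]
    -- Cauchy estimate
    have hcauchy := my_cauchy_bound hRpos (hHdiff.mono hclose) hsphere n
    -- transfer to the real function
    have htrans := my_transfer isOpen_Ioo hHdiff hsub heq n x ⟨hxε, hx1⟩
    -- final arithmetic
    have key := my_key_bound hα n hx0
    have hfact : ((n.factorial : ℝ)) ^ (1/α + 1)
        = (n.factorial : ℝ) ^ (α⁻¹) * (n.factorial : ℝ) := by
      rw [Real.rpow_add (by positivity), Real.rpow_one, one_div]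
    have hexp1 : Real.exp (1 - x ^ (-α) / 2) = Real.exp 1 * Real.exp (-(x ^ (-α)) / 2) := by
      rw [← Real.exp_add]; ring_nf
    have hδn : (δ : ℝ) ^ n ≠ 0 := by positivity
    have hxn : (x : ℝ) ^ n ≠ 0 := by positivity
    have hsplit : (n.factorial : ℝ) * Real.exp (1 - x ^ (-α) / 2) / (δ * x) ^ n
        = (Real.exp 1 * n.factorial / δ ^ n) * (Real.exp (-(x ^ (-α)) / 2) / x ^ n) := by
      rw [hexp1, mul_pow]
      field_simp
    calc |iteratedDeriv n (fun x : ℝ => Real.exp (2 * (1 - ε ^ (-α)) - (1 - x ^ (-α)))) x|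
        = |(iteratedDeriv n H ↑x).re| := by rw [htrans]
      _ ≤ ‖iteratedDeriv n H ↑x‖ := Complex.abs_re_le_norm _
      _ = ‖iteratedDeriv n H ↑x‖ := rfl
      _ ≤ n.factorial * Real.exp (1 - x ^ (-α) / 2) / (δ * x) ^ n := hcauchy
      _ = (Real.exp 1 * n.factorial / δ ^ n) * (Real.exp (-(x ^ (-α)) / 2) / x ^ n) := hsplit
      _ ≤ (Real.exp 1 * n.factorial / δ ^ n) * ((2 * Real.exp 1) ^ n * (n.factorial : ℝ) ^ (α⁻¹)) := by
          refine mul_le_mul_of_nonneg_left key (by positivity)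
      _ = Real.exp 1 * (2 * Real.exp 1 / δ) ^ n * (n.factorial : ℝ) ^ (1/α + 1) := by
          rw [hfact, div_pow]
          field_simp
end

section
/- Let α ≥ 1. There exist A, B > 0 (depending only on α) such that for every ε ∈ (0,1) there exist three maps φ_1, φ_2, φ_3 : (0,1) → ℝ², each of whose component functions is (A, B, 1/α)-mild, such that the curve {(x,y) ∈ (0,1)² : x·y = ε²} is contained in the union of the images of φ_1, φ_2, φ_3. In other words, the family of hyperbolas x·y = ε² in (0,1)², parametrized by ε ∈ (0,1), admits a uniform 1/α-mild parametrization consisting of three charts. -/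
open Real Set

/-- A map `(0,1) → ℝ²` is `(A,B,C)`-mild if both component functions are. -/
def IsMildPair (φ : ℝ → ℝ × ℝ) (A B C : ℝ) : Prop :=
  IsMild (Ioo 0 1) (fun x => (φ x).1) A B C ∧ IsMild (Ioo 0 1) (fun x => (φ x).2) A B C

noncomputable section
namespace Stmt15Aux

set_option linter.unusedVariables false

/-- One differentiation step on the representation `(c, β) ↦ c * (t+a)^(-β) * exp (s*(t+a)^(-α))`. -/
def dstep (α s : ℝ) (p : ℝ × ℝ) : List (ℝ × ℝ) :=
  [(-(p.1 * p.2), p.2 + 1), (-(s * α * p.1), p.2 + α + 1)]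

def dlist (α s C : ℝ) : ℕ → List (ℝ × ℝ)
  | 0 => [(C, 0)]
  | n + 1 => (dlist α s C n).flatMap (dstep α s)

def tval (α s a t : ℝ) (p : ℝ × ℝ) : ℝ :=
  p.1 * (t + a) ^ (-p.2) * Real.exp (s * (t + a) ^ (-α))

lemma tval_hasDerivAt (α s a : ℝ) (c β t : ℝ) (hv : 0 < t + a) :
    HasDerivAt (fun t => c * (t + a) ^ (-β) * Real.exp (s * (t + a) ^ (-α)))
      (-(c * β) * (t + a) ^ (-(β + 1)) * Real.exp (s * (t + a) ^ (-α))
        + -(s * α * c) * (t + a) ^ (-(β + α + 1)) * Real.exp (s * (t + a) ^ (-α))) t := by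
  have h1 : HasDerivAt (fun t : ℝ => t + a) 1 t := (hasDerivAt_id t).add_const a
  have h2 : HasDerivAt (fun t : ℝ => (t + a) ^ (-β)) (1 * (-β) * (t + a) ^ (-β - 1)) t :=
    h1.rpow_const (Or.inl hv.ne')
  have h3 : HasDerivAt (fun t : ℝ => (t + a) ^ (-α)) (1 * (-α) * (t + a) ^ (-α - 1)) t :=
    h1.rpow_const (Or.inl hv.ne')
  have h5 := (h3.const_mul s).exp
  have h6 := (h2.const_mul c).mul h5
  refine h6.congr_deriv ?_
  have e1 : (t + a) ^ (-(β + 1)) = (t + a) ^ (-β - 1) := by ring_nf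
  have e2 : (t + a) ^ (-(β + α + 1)) = (t + a) ^ (-β) * (t + a) ^ (-α - 1) := by
    rw [← Real.rpow_add hv]; ring_nf
  rw [e1, e2]; ring

lemma listsum_hasDerivAt (α s a t : ℝ) (hv : 0 < t + a) (l : List (ℝ × ℝ)) :
    HasDerivAt (fun t => (l.map (tval α s a t)).sum)
      (((l.flatMap (dstep α s)).map (tval α s a t)).sum) t := by
  induction l with
  | nil => simpa using hasDerivAt_const t (0 : ℝ)
  | cons p l ih =>
    have hp := tval_hasDerivAt α s a p.1 p.2 t hv
    have h := hp.add ih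
    simp only [List.map_cons, List.sum_cons, List.flatMap_cons, List.map_append, List.sum_append,
      dstep, List.map_cons, List.sum_cons, List.map_nil, List.sum_nil, tval]
    refine h.congr_deriv ?_
    ring

lemma iter_formula (α s C a : ℝ) (n : ℕ) :
    ∀ t, -a < t →
      iteratedDeriv n (fun t => C * Real.exp (s * (t + a) ^ (-α))) t
        = ((dlist α s C n).map (tval α s a t)).sum := by
  induction n with
  | zero =>
    intro t ht
    simp [dlist, tval, iteratedDeriv_zero, Real.rpow_zero]
  | succ n ih =>
    intro t ht
    rw [iteratedDeriv_succ]
    have hEv : iteratedDeriv n (fun t => C * Real.exp (s * (t + a) ^ (-α)))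
        =ᶠ[nhds t] fun u => ((dlist α s C n).map (tval α s a u)).sum := by
      filter_upwards [isOpen_Ioi.mem_nhds (show t ∈ Ioi (-a) from ht)] with u hu
      exact ih u hu
    rw [hEv.deriv_eq]
    have := (listsum_hasDerivAt α s a t (by linarith) (dlist α s C n)).deriv
    rw [this]
    rfl

lemma dlist_beta (α s C : ℝ) (hα : 1 ≤ α) (n : ℕ) :
    ∀ p ∈ dlist α s C n, 0 ≤ p.2 ∧ p.2 ≤ (α + 1) * n := by
  induction n with
  | zero => intro p hp; simp [dlist] at hp; simp [hp]
  | succ n ih =>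
    intro p hp
    simp only [dlist, List.mem_flatMap] at hp
    obtain ⟨q, hq, hc⟩ := hp
    obtain ⟨hq0, hqn⟩ := ih q hq
    simp only [dstep, List.mem_cons, List.mem_singleton, List.not_mem_nil, or_false] at hc
    push_cast
    rcases hc with rfl | rfl <;> constructor <;> simp <;> nlinarith

/-- weight: `S α β` majorizes `sup_{u>0} u^(β/α) e^(-u)`. -/
def S (α β : ℝ) : ℝ := Real.exp (β / α * Real.log ((β + α) / α) - β / α)

lemma S_pos (α β : ℝ) : 0 < S α β := Real.exp_pos _

lemma S_zero (α : ℝ) : S α 0 = 1 := by simp [S]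

lemma sup_bound (α β : ℝ) (hα : 1 ≤ α) (hβ : 0 ≤ β) {u : ℝ} (hu : 0 < u) :
    u ^ (β / α) * Real.exp (-u) ≤ S α β := by
  have hα0 : 0 < α := lt_of_lt_of_le one_pos hα
  have hc : 0 ≤ β / α := div_nonneg hβ hα0.le
  have hb : 0 < (β + α) / α := by positivity
  rw [Real.rpow_def_of_pos hu, ← Real.exp_add, S]
  apply Real.exp_le_exp.mpr
  have key : Real.log u - Real.log ((β + α) / α) ≤ u / ((β + α) / α) - 1 := by
    have h := Real.log_le_sub_one_of_pos (div_pos hu hb)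
    rwa [Real.log_div hu.ne' hb.ne'] at h
  have h1 : β / α * (Real.log u - Real.log ((β + α) / α)) ≤
      β / α * (u / ((β + α) / α) - 1) := mul_le_mul_of_nonneg_left key hc
  have h2 : β / α * (u / ((β + α) / α)) ≤ u := by
    have e : β / α * (u / ((β + α) / α)) = u * (β / (β + α)) := by
      field_simp
    rw [e]
    calc u * (β / (β + α)) ≤ u * 1 := by
          apply mul_le_mul_of_nonneg_left _ hu.le
          exact div_le_one_of_le₀ (by linarith) (by linarith)
      _ = u := mul_one u
  nlinarith [h1, h2]

/-- key ratio estimate : `S α (β+δ) ≤ (β+δ+α)^(δ/α) * S α β`. -/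
lemma S_ratio (α β δ : ℝ) (hα : 1 ≤ α) (hβ : 0 ≤ β) (hδ : 0 ≤ δ) :
    S α (β + δ) ≤ (β + δ + α) ^ (δ / α) * S α β := by
  have hα0 : 0 < α := lt_of_lt_of_le one_pos hα
  have hba : 0 < β + α := by linarith
  have hbda : 0 < β + δ + α := by linarith
  rw [show (β + δ + α) ^ (δ / α) = Real.exp (δ / α * Real.log (β + δ + α)) by
    rw [Real.rpow_def_of_pos hbda, mul_comm]]
  rw [S, S, ← Real.exp_add]
  apply Real.exp_le_exp.mpr
  -- (β+δ)/α * log ((β+δ+α)/α) - (β+δ)/α ≤ δ/α log (β+δ+α) + β/α log((β+α)/α) - β/α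
  have split : (β + δ) / α * Real.log ((β + δ + α) / α)
      = β / α * Real.log ((β + δ + α) / α) + δ / α * Real.log ((β + δ + α) / α) := by ring
  have l1 : Real.log ((β + δ + α) / α) ≤ Real.log (β + δ + α) := by
    apply Real.log_le_log (by positivity)
    calc (β + δ + α) / α ≤ (β + δ + α) / 1 := by
          apply div_le_div_of_nonneg_left (by linarith) one_pos hα
      _ = β + δ + α := by ring
  have l2 : Real.log ((β + δ + α) / α) - Real.log ((β + α) / α) ≤ δ / (β + α) := by
    have e : Real.log ((β + δ + α) / α) - Real.log ((β + α) / α)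
        = Real.log ((β + δ + α) / (β + α)) := by
      rw [Real.log_div hbda.ne' hα0.ne', Real.log_div hba.ne' hα0.ne',
        Real.log_div hbda.ne' hba.ne']
      ring
    rw [e]
    have h := Real.log_le_sub_one_of_pos (div_pos hbda hba)
    calc Real.log ((β + δ + α) / (β + α)) ≤ (β + δ + α) / (β + α) - 1 := h
      _ = δ / (β + α) := by field_simp; ring
  have l3 : β / α * Real.log ((β + δ + α) / α)
      ≤ β / α * Real.log ((β + α) / α) + δ / α := by
    have step : β / α * (Real.log ((β + δ + α) / α) - Real.log ((β + α) / α)) ≤ δ / α := by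
      calc β / α * (Real.log ((β + δ + α) / α) - Real.log ((β + α) / α))
          ≤ β / α * (δ / (β + α)) := by
            apply mul_le_mul_of_nonneg_left l2 (div_nonneg hβ hα0.le)
        _ = δ / α * (β / (β + α)) := by field_simp
        _ ≤ δ / α * 1 := by
            apply mul_le_mul_of_nonneg_left _ (div_nonneg hδ hα0.le)
            exact div_le_one_of_le₀ (by linarith) hba.le
        _ = δ / α := mul_one _
    nlinarith [step]
  have l4 : δ / α * Real.log ((β + δ + α) / α) ≤ δ / α * Real.log (β + δ + α) :=
    mul_le_mul_of_nonneg_left l1 (div_nonneg hδ hα0.le)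
  have hsum : (β + δ) / α = β / α + δ / α := by ring
  linarith [l3, l4, split, hsum]

/- helper list lemmas -/
lemma list_sum_le {X : Type*} (l : List X) (f g : X → ℝ) (h : ∀ p ∈ l, f p ≤ g p) :
    (l.map f).sum ≤ (l.map g).sum := by
  induction l with
  | nil => simp
  | cons p l ih =>
    simp only [List.map_cons, List.sum_cons]
    exact add_le_add (h p (by simp)) (ih fun q hq => h q (by simp [hq]))

lemma list_abs_sum_le {X : Type*} (l : List X) (f g : X → ℝ) (h : ∀ p ∈ l, |f p| ≤ g p) :
    |(l.map f).sum| ≤ (l.map g).sum := by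
  induction l with
  | nil => simp
  | cons p l ih =>
    simp only [List.map_cons, List.sum_cons]
    calc |f p + (l.map f).sum| ≤ |f p| + |(l.map f).sum| := abs_add_le _ _
      _ ≤ g p + (l.map g).sum :=
        add_le_add (h p (by simp)) (ih fun q hq => h q (by simp [hq]))

lemma flatMap_map_sum {X : Type*} (l : List X) (h : X → List X) (f : X → ℝ) :
    ((l.flatMap h).map f).sum = (l.map (fun p => ((h p).map f).sum)).sum := by
  induction l with
  | nil => simp
  | cons p l ih => simp [List.flatMap_cons, ih]

/-- the key one-step bound -/
lemma step_bound (α s : ℝ) (hα : 1 ≤ α) (hs : |s| ≤ 1) (n : ℕ) (c β : ℝ)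
    (hβ0 : 0 ≤ β) (hβn : β ≤ (α + 1) * n) :
    |(-(c * β))| * S α (β + 1) + |(-(s * α * c))| * S α (β + α + 1)
      ≤ (5 * α * (α + 1) ^ 2 * ((n : ℝ) + 1) ^ ((1 : ℝ) + 1 / α)) * (|c| * S α β) := by
  have hα0 : 0 < α := lt_of_lt_of_le one_pos hα
  have hc : (0:ℝ) ≤ |c| := abs_nonneg c
  have hn1 : (0:ℝ) ≤ (n:ℝ) + 1 := by positivity
  have hexp : (0:ℝ) ≤ 1 + 1/α := by positivity
  -- T1
  have r1 : S α (β + 1) ≤ (β + α + 1) ^ ((1:ℝ) / α) * S α β := by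
    have := S_ratio α β 1 hα hβ0 zero_le_one
    rwa [show β + 1 + α = β + α + 1 by ring] at this
  have hY : (0:ℝ) < β + α + 1 := by linarith
  have t1 : β * S α (β + 1) ≤ (β + α + 1) ^ ((1:ℝ) + 1 / α) * S α β := by
    calc β * S α (β + 1) ≤ β * ((β + α + 1) ^ ((1:ℝ) / α) * S α β) := by
          apply mul_le_mul_of_nonneg_left r1 hβ0
      _ ≤ (β + α + 1) * ((β + α + 1) ^ ((1:ℝ) / α) * S α β) := by
          apply mul_le_mul_of_nonneg_right (by linarith)
          exact mul_nonneg (Real.rpow_nonneg hY.le _) (S_pos _ _).le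
      _ = (β + α + 1) ^ ((1:ℝ) + 1/α) * S α β := by
          rw [Real.rpow_add hY, Real.rpow_one]; ring
  -- T2
  have r2 : S α (β + α + 1) ≤ (β + 2*α + 1) ^ ((1:ℝ) + 1 / α) * S α β := by
    have := S_ratio α β (α + 1) hα hβ0 (by linarith)
    rw [show β + (α + 1) = β + α + 1 by ring] at this
    rw [show β + α + 1 + α = β + 2*α + 1 by ring,
      show (α + 1) / α = (1:ℝ) + 1/α by field_simp] at this
    exact this
  -- base comparisons
  have base1 : β + α + 1 ≤ (α + 1) * ((n:ℝ) + 1) := by nlinarith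
  have base2 : β + 2*α + 1 ≤ 2 * (α + 1) * ((n:ℝ) + 1) := by nlinarith
  have pow1 : (β + α + 1) ^ ((1:ℝ) + 1/α) ≤ ((α+1) * ((n:ℝ)+1)) ^ ((1:ℝ) + 1/α) :=
    Real.rpow_le_rpow hY.le base1 hexp
  have pow2 : (β + 2*α + 1) ^ ((1:ℝ) + 1/α) ≤ (2*(α+1) * ((n:ℝ)+1)) ^ ((1:ℝ) + 1/α) :=
    Real.rpow_le_rpow (by linarith) (by linarith) hexp
  have split1 : ((α+1) * ((n:ℝ)+1)) ^ ((1:ℝ) + 1/α)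
      = (α+1) ^ ((1:ℝ) + 1/α) * ((n:ℝ)+1) ^ ((1:ℝ) + 1/α) :=
    Real.mul_rpow (by linarith) hn1
  have split2 : (2*(α+1) * ((n:ℝ)+1)) ^ ((1:ℝ) + 1/α)
      = (2*(α+1)) ^ ((1:ℝ) + 1/α) * ((n:ℝ)+1) ^ ((1:ℝ) + 1/α) :=
    Real.mul_rpow (by linarith) hn1
  have hee : (1:ℝ) + 1/α ≤ 2 := by
    have : 1/α ≤ 1 := by
      rw [div_le_one hα0]; exact hα
    linarith
  have cap1 : (α+1) ^ ((1:ℝ) + 1/α) ≤ (α+1)^2 := by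
    calc (α+1) ^ ((1:ℝ) + 1/α) ≤ (α+1) ^ (2:ℝ) :=
          Real.rpow_le_rpow_of_exponent_le (by linarith) hee
      _ = (α+1)^2 := by
          rw [show ((2:ℝ)) = ((2:ℕ):ℝ) by norm_num, Real.rpow_natCast]
  have cap2 : (2*(α+1)) ^ ((1:ℝ) + 1/α) ≤ 4*(α+1)^2 := by
    calc (2*(α+1)) ^ ((1:ℝ) + 1/α) ≤ (2*(α+1)) ^ (2:ℝ) :=
          Real.rpow_le_rpow_of_exponent_le (by linarith) hee
      _ = (2*(α+1))^2 := by
          rw [show ((2:ℝ)) = ((2:ℕ):ℝ) by norm_num, Real.rpow_natCast]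
      _ = 4*(α+1)^2 := by ring
  -- absolute values
  have a1 : |(-(c * β))| = |c| * β := by
    rw [abs_neg, abs_mul, abs_of_nonneg hβ0]
  have a2 : |(-(s * α * c))| ≤ α * |c| := by
    rw [abs_neg, abs_mul, abs_mul, abs_of_pos hα0]
    calc |s| * α * |c| ≤ 1 * α * |c| := by
          apply mul_le_mul_of_nonneg_right (mul_le_mul_of_nonneg_right hs hα0.le) hc
      _ = α * |c| := by ring
  have hSpos := (S_pos α β).le
  have hS1pos := (S_pos α (β+1)).le
  have hS2pos := (S_pos α (β+α+1)).le
  have hnp : (0:ℝ) ≤ ((n:ℝ)+1) ^ ((1:ℝ) + 1/α) := by positivity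
  calc |(-(c * β))| * S α (β + 1) + |(-(s * α * c))| * S α (β + α + 1)
      ≤ |c| * (β * S α (β+1)) + α * |c| * S α (β + α + 1) := by
        rw [a1]
        have := mul_le_mul_of_nonneg_right a2 hS2pos
        nlinarith [this]
    _ ≤ |c| * ((β + α + 1) ^ ((1:ℝ) + 1/α) * S α β)
        + α * |c| * ((β + 2*α + 1) ^ ((1:ℝ) + 1/α) * S α β) := by
        have h1 := mul_le_mul_of_nonneg_left t1 hc
        have h2 := mul_le_mul_of_nonneg_left r2 (by positivity : (0:ℝ) ≤ α * |c|)
        linarith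
    _ ≤ |c| * ((α+1)^2 * ((n:ℝ)+1) ^ ((1:ℝ) + 1/α) * S α β)
        + α * |c| * (4*(α+1)^2 * ((n:ℝ)+1) ^ ((1:ℝ) + 1/α) * S α β) := by
        have b1 : (β + α + 1) ^ ((1:ℝ) + 1/α) ≤ (α+1)^2 * ((n:ℝ)+1) ^ ((1:ℝ) + 1/α) := by
          calc (β + α + 1) ^ ((1:ℝ) + 1/α) ≤ ((α+1) * ((n:ℝ)+1)) ^ ((1:ℝ) + 1/α) := pow1
            _ = (α+1) ^ ((1:ℝ) + 1/α) * ((n:ℝ)+1) ^ ((1:ℝ) + 1/α) := split1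
            _ ≤ (α+1)^2 * ((n:ℝ)+1) ^ ((1:ℝ) + 1/α) :=
                mul_le_mul_of_nonneg_right cap1 hnp
        have b2 : (β + 2*α + 1) ^ ((1:ℝ) + 1/α) ≤ 4*(α+1)^2 * ((n:ℝ)+1) ^ ((1:ℝ) + 1/α) := by
          calc (β + 2*α + 1) ^ ((1:ℝ) + 1/α) ≤ (2*(α+1) * ((n:ℝ)+1)) ^ ((1:ℝ) + 1/α) := pow2
            _ = (2*(α+1)) ^ ((1:ℝ) + 1/α) * ((n:ℝ)+1) ^ ((1:ℝ) + 1/α) := split2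
            _ ≤ 4*(α+1)^2 * ((n:ℝ)+1) ^ ((1:ℝ) + 1/α) :=
                mul_le_mul_of_nonneg_right cap2 hnp
        have e1 := mul_le_mul_of_nonneg_right b1 hSpos
        have e2 := mul_le_mul_of_nonneg_right b2 hSpos
        have f1 := mul_le_mul_of_nonneg_left e1 hc
        have f2 := mul_le_mul_of_nonneg_left e2 (by positivity : (0:ℝ) ≤ α * |c|)
        linarith
    _ ≤ (5 * α * (α + 1) ^ 2 * ((n : ℝ) + 1) ^ ((1 : ℝ) + 1 / α)) * (|c| * S α β) := by
        have hX : (0:ℝ) ≤ (α+1)^2 * (((n:ℝ)+1) ^ ((1:ℝ)+1/α)) * (S α β * |c|) :=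
          mul_nonneg (mul_nonneg (by positivity) hnp) (mul_nonneg hSpos hc)
        nlinarith [mul_nonneg (sub_nonneg.mpr hα) hX, hX]

def wsum (α s C : ℝ) (n : ℕ) : ℝ :=
  ((dlist α s C n).map (fun p => |p.1| * S α p.2)).sum

lemma wsum_nonneg (α s C : ℝ) (n : ℕ) : 0 ≤ wsum α s C n := by
  unfold wsum
  apply List.sum_nonneg
  intro x hx
  simp only [List.mem_map] at hx
  obtain ⟨p, _, rfl⟩ := hx
  exact mul_nonneg (abs_nonneg _) (S_pos _ _).le

lemma wsum_succ_le (α s C : ℝ) (hα : 1 ≤ α) (hs : |s| ≤ 1) (n : ℕ) :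
    wsum α s C (n + 1)
      ≤ (5 * α * (α + 1) ^ 2 * ((n : ℝ) + 1) ^ ((1 : ℝ) + 1 / α)) * wsum α s C n := by
  unfold wsum
  show (((dlist α s C n).flatMap (dstep α s)).map _).sum ≤ _
  rw [flatMap_map_sum]
  have pointwise : ∀ p ∈ dlist α s C n,
      (((dstep α s p).map (fun q => |q.1| * S α q.2)).sum)
        ≤ (5 * α * (α + 1) ^ 2 * ((n : ℝ) + 1) ^ ((1 : ℝ) + 1 / α)) * (|p.1| * S α p.2) := by
    intro p hp
    obtain ⟨hβ0, hβn⟩ := dlist_beta α s C hα n p hp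
    simp only [dstep, List.map_cons, List.map_nil, List.sum_cons, List.sum_nil, add_zero]
    exact step_bound α s hα hs n p.1 p.2 hβ0 hβn
  calc ((dlist α s C n).map fun p => (((dstep α s p).map (fun q => |q.1| * S α q.2)).sum)).sum
      ≤ ((dlist α s C n).map fun p =>
          (5 * α * (α + 1) ^ 2 * ((n : ℝ) + 1) ^ ((1 : ℝ) + 1 / α)) * (|p.1| * S α p.2)).sum :=
        list_sum_le _ _ _ pointwise
    _ = (5 * α * (α + 1) ^ 2 * ((n : ℝ) + 1) ^ ((1 : ℝ) + 1 / α))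
          * ((dlist α s C n).map fun p => |p.1| * S α p.2).sum := by
        rw [← List.sum_map_mul_left]

lemma wsum_le (α s C : ℝ) (hα : 1 ≤ α) (hs : |s| ≤ 1) (n : ℕ) :
    wsum α s C n ≤ |C| * (5 * α * (α + 1) ^ 2) ^ n * ((n.factorial : ℝ)) ^ ((1:ℝ) + 1 / α) := by
  have hα0 : 0 < α := lt_of_lt_of_le one_pos hα
  have hK : (0:ℝ) ≤ 5 * α * (α + 1) ^ 2 := by positivity
  induction n with
  | zero =>
    simp [wsum, dlist, S_zero]
  | succ n ih =>
    have h1 := wsum_succ_le α s C hα hs n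
    have h2 : (5 * α * (α + 1) ^ 2 * ((n : ℝ) + 1) ^ ((1 : ℝ) + 1 / α)) * wsum α s C n
        ≤ (5 * α * (α + 1) ^ 2 * ((n : ℝ) + 1) ^ ((1 : ℝ) + 1 / α))
          * (|C| * (5 * α * (α + 1) ^ 2) ^ n * ((n.factorial : ℝ)) ^ ((1:ℝ) + 1 / α)) := by
      apply mul_le_mul_of_nonneg_left ih (by positivity)
    have h3 : (5 * α * (α + 1) ^ 2 * ((n : ℝ) + 1) ^ ((1 : ℝ) + 1 / α))
          * (|C| * (5 * α * (α + 1) ^ 2) ^ n * ((n.factorial : ℝ)) ^ ((1:ℝ) + 1 / α))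
        = |C| * (5 * α * (α + 1) ^ 2) ^ (n+1)
          * ((((n:ℝ) + 1) * (n.factorial : ℝ)) ^ ((1:ℝ) + 1 / α)) := by
      rw [Real.mul_rpow (by positivity) (by positivity)]
      ring
    have h4 : (((n:ℝ) + 1) * (n.factorial : ℝ)) = (((n+1).factorial : ℝ)) := by
      rw [Nat.factorial_succ]; push_cast; ring
    calc wsum α s C (n+1)
        ≤ (5 * α * (α + 1) ^ 2 * ((n : ℝ) + 1) ^ ((1 : ℝ) + 1 / α)) * wsum α s C n := h1
      _ ≤ (5 * α * (α + 1) ^ 2 * ((n : ℝ) + 1) ^ ((1 : ℝ) + 1 / α))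
          * (|C| * (5 * α * (α + 1) ^ 2) ^ n * ((n.factorial : ℝ)) ^ ((1:ℝ) + 1 / α)) := h2
      _ = |C| * (5 * α * (α + 1) ^ 2) ^ (n+1)
          * ((((n+1).factorial : ℝ)) ^ ((1:ℝ) + 1 / α)) := by rw [h3, h4]

lemma vpow_eq (α β v : ℝ) (hv : 0 < v) (hα0 : α ≠ 0) :
    v ^ (-β) = (v ^ (-α)) ^ (β / α) := by
  rw [← Real.rpow_mul hv.le]
  congr 1
  field_simp

/-- x-case : s = -1 -/
lemma deriv_bound_neg (α C a : ℝ) (hα : 1 ≤ α) (ha : 0 < a) (n : ℕ) (t : ℝ) (ht : -a < t) :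
    |iteratedDeriv n (fun t => C * Real.exp ((-1) * (t + a) ^ (-α))) t|
      ≤ |C| * (5 * α * (α + 1) ^ 2) ^ n * ((n.factorial : ℝ)) ^ ((1:ℝ) + 1 / α) := by
  have hα0 : (0:ℝ) < α := lt_of_lt_of_le one_pos hα
  have hv : 0 < t + a := by linarith
  have hu : 0 < (t + a) ^ (-α) := Real.rpow_pos_of_pos hv _
  rw [iter_formula α (-1) C a n t ht]
  calc |((dlist α (-1) C n).map (tval α (-1) a t)).sum|
      ≤ ((dlist α (-1) C n).map (fun p => |p.1| * S α p.2)).sum := by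
        apply list_abs_sum_le
        intro p hp
        obtain ⟨hβ0, _⟩ := dlist_beta α (-1) C hα n p hp
        have e1 : |tval α (-1) a t p| = |p.1| * ((t+a)^(-α)) ^ (p.2/α) * Real.exp (-(t+a)^(-α)) := by
          unfold tval
          rw [abs_mul, abs_mul, abs_of_pos (Real.exp_pos _), abs_of_pos (Real.rpow_pos_of_pos hv _),
            vpow_eq α p.2 (t+a) hv hα0.ne', neg_one_mul]
        rw [e1, mul_assoc]
        apply mul_le_mul_of_nonneg_left _ (abs_nonneg _)
        exact sup_bound α p.2 hα hβ0 hu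
    _ ≤ |C| * (5 * α * (α + 1) ^ 2) ^ n * ((n.factorial : ℝ)) ^ ((1:ℝ) + 1 / α) :=
        wsum_le α (-1) C hα (by norm_num) n

/-- y-case : s = 1, with cap `(t+a)^(-α) ≤ M`. -/
lemma deriv_bound_pos (α C a M : ℝ) (hα : 1 ≤ α) (ha : 0 < a) (hM : 0 < M)
    (n : ℕ) (t : ℝ) (ht : -a < t) (hcap : (t + a) ^ (-α) ≤ M) :
    |iteratedDeriv n (fun t => C * Real.exp ((1:ℝ) * (t + a) ^ (-α))) t|
      ≤ Real.exp (2 * M) * |C| * (5 * α * (α + 1) ^ 2) ^ n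
          * ((n.factorial : ℝ)) ^ ((1:ℝ) + 1 / α) := by
  have hα0 : (0:ℝ) < α := lt_of_lt_of_le one_pos hα
  have hv : 0 < t + a := by linarith
  have hu : 0 < (t + a) ^ (-α) := Real.rpow_pos_of_pos hv _
  rw [iter_formula α 1 C a n t ht]
  calc |((dlist α 1 C n).map (tval α 1 a t)).sum|
      ≤ ((dlist α 1 C n).map (fun p => Real.exp (2*M) * (|p.1| * S α p.2))).sum := by
        apply list_abs_sum_le
        intro p hp
        obtain ⟨hβ0, _⟩ := dlist_beta α 1 C hα n p hp
        have e1 : |tval α 1 a t p| = |p.1| * (((t+a)^(-α)) ^ (p.2/α) * Real.exp ((t+a)^(-α))) := by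
          unfold tval
          rw [abs_mul, abs_mul, abs_of_pos (Real.exp_pos _), abs_of_pos (Real.rpow_pos_of_pos hv _),
            vpow_eq α p.2 (t+a) hv hα0.ne', one_mul]
          ring
        rw [e1]
        have step1 : ((t+a)^(-α)) ^ (p.2/α) * Real.exp ((t+a)^(-α)) ≤ M ^ (p.2/α) * Real.exp M := by
          apply mul_le_mul _ (Real.exp_le_exp.mpr hcap) (Real.exp_pos _).le
            (Real.rpow_nonneg hM.le _)
          exact Real.rpow_le_rpow hu.le hcap (div_nonneg hβ0 hα0.le)
        have step2 : M ^ (p.2/α) * Real.exp M = (M ^ (p.2/α) * Real.exp (-M)) * Real.exp (2*M) := by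
          rw [mul_assoc, ← Real.exp_add]
          ring_nf
        have step3 : M ^ (p.2/α) * Real.exp (-M) ≤ S α p.2 := sup_bound α p.2 hα hβ0 hM
        calc |p.1| * (((t+a)^(-α)) ^ (p.2/α) * Real.exp ((t+a)^(-α)))
            ≤ |p.1| * (M ^ (p.2/α) * Real.exp M) :=
              mul_le_mul_of_nonneg_left step1 (abs_nonneg _)
          _ = |p.1| * (M ^ (p.2/α) * Real.exp (-M)) * Real.exp (2*M) := by rw [step2]; ring
          _ ≤ |p.1| * S α p.2 * Real.exp (2*M) := by
              apply mul_le_mul_of_nonneg_right _ (Real.exp_pos _).le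
              exact mul_le_mul_of_nonneg_left step3 (abs_nonneg _)
          _ = Real.exp (2*M) * (|p.1| * S α p.2) := by ring
    _ = Real.exp (2*M) * ((dlist α 1 C n).map (fun p => |p.1| * S α p.2)).sum := by
        rw [← List.sum_map_mul_left]
    _ ≤ Real.exp (2 * M) * (|C| * (5 * α * (α + 1) ^ 2) ^ n
          * ((n.factorial : ℝ)) ^ ((1:ℝ) + 1 / α)) := by
        apply mul_le_mul_of_nonneg_left (wsum_le α 1 C hα (by norm_num) n) (Real.exp_pos _).le
    _ = Real.exp (2 * M) * |C| * (5 * α * (α + 1) ^ 2) ^ n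
          * ((n.factorial : ℝ)) ^ ((1:ℝ) + 1 / α) := by ring

/-- anti-monotonicity of `x ↦ x ^ (-γ)` for `γ > 0`. -/
lemma rpow_neg_lt (x y γ : ℝ) (hx : 0 < x) (hxy : x < y) (hγ : 0 < γ) :
    y ^ (-γ) < x ^ (-γ) := by
  rw [Real.rpow_neg hx.le, Real.rpow_neg (hx.trans hxy).le]
  have h1 : x ^ γ < y ^ γ := Real.rpow_lt_rpow hx.le hxy hγ
  have h2 : 0 < x ^ γ := Real.rpow_pos_of_pos hx _
  exact inv_strictAnti₀ h2 h1

lemma rpow_neg_rpow_neg (x γ : ℝ) (hx : 0 < x) (hγ : γ ≠ 0) :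
    (x ^ (-γ⁻¹)) ^ (-γ) = x := by
  rw [← Real.rpow_mul hx.le]
  rw [show -γ⁻¹ * -γ = γ⁻¹ * γ by ring, inv_mul_cancel₀ hγ, Real.rpow_one]

def Lc (ε : ℝ) : ℝ := -Real.log ε
def Mc (ε : ℝ) : ℝ := Lc ε + 2
def ac (α ε : ℝ) : ℝ := (Mc ε) ^ (-α⁻¹)
def bc (α ε : ℝ) : ℝ := (1 + ac α ε) ^ (-α)
def xf (α ε : ℝ) : ℝ → ℝ :=
  fun t => Real.exp (bc α ε) * Real.exp ((-1) * (t + ac α ε) ^ (-α))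
def yf (α ε : ℝ) : ℝ → ℝ :=
  fun t => (ε ^ 2 * Real.exp (-(bc α ε))) * Real.exp ((1:ℝ) * (t + ac α ε) ^ (-α))

lemma L_pos (ε : ℝ) (hε : ε ∈ Ioo (0:ℝ) 1) : 0 < Lc ε := by
  have := Real.log_neg hε.1 hε.2
  unfold Lc; linarith

lemma M_big (ε : ℝ) (hε : ε ∈ Ioo (0:ℝ) 1) : 2 < Mc ε := by
  have := L_pos ε hε; unfold Mc; linarith

lemma a_pos (α ε : ℝ) (hε : ε ∈ Ioo (0:ℝ) 1) : 0 < ac α ε :=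
  Real.rpow_pos_of_pos (by have := M_big ε hε; linarith) _

lemma a_rpow (α ε : ℝ) (hα : 1 ≤ α) (hε : ε ∈ Ioo (0:ℝ) 1) :
    (ac α ε) ^ (-α) = Mc ε := by
  have hα0 : (0:ℝ) < α := lt_of_lt_of_le one_pos hα
  exact rpow_neg_rpow_neg (Mc ε) α (by have := M_big ε hε; linarith) hα0.ne'

lemma b_le_one (α ε : ℝ) (hα : 1 ≤ α) (hε : ε ∈ Ioo (0:ℝ) 1) : bc α ε ≤ 1 := by
  have := a_pos α ε hε
  have hα0 : (0:ℝ) < α := lt_of_lt_of_le one_pos hα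
  exact Real.rpow_le_one_of_one_le_of_nonpos (by linarith) (by linarith)

lemma b_pos (α ε : ℝ) (hε : ε ∈ Ioo (0:ℝ) 1) : 0 < bc α ε :=
  Real.rpow_pos_of_pos (by have := a_pos α ε hε; linarith) _

lemma eps_eq (ε : ℝ) (hε : ε ∈ Ioo (0:ℝ) 1) : ε = Real.exp (-(Lc ε)) := by
  unfold Lc
  rw [neg_neg, Real.exp_log hε.1]

lemma u_cap (α ε : ℝ) (hα : 1 ≤ α) (hε : ε ∈ Ioo (0:ℝ) 1) (t : ℝ) (ht : 0 < t) :
    (t + ac α ε) ^ (-α) ≤ Mc ε := by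
  have hα0 : (0:ℝ) < α := lt_of_lt_of_le one_pos hα
  have ha := a_pos α ε hε
  have h := rpow_neg_lt (ac α ε) (t + ac α ε) α ha (by linarith) hα0
  rw [a_rpow α ε hα hε] at h
  exact h.le

/-- smoothness of the chart components -/
lemma contDiffOn_xf (α ε : ℝ) (hα : 1 ≤ α) (hε : ε ∈ Ioo (0:ℝ) 1) :
    ContDiffOn ℝ (⊤ : ℕ∞) (xf α ε) (Ioo 0 1) := by
  have ha := a_pos α ε hε
  intro t ht
  apply ContDiffAt.contDiffWithinAt
  have h1 : ContDiffAt ℝ (⊤ : ℕ∞) (fun t : ℝ => t + ac α ε) t :=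
    (contDiff_id.add contDiff_const).contDiffAt
  have h2 : ContDiffAt ℝ (⊤ : ℕ∞) (fun t : ℝ => (t + ac α ε) ^ (-α)) t :=
    h1.rpow_const_of_ne (by have := ht.1; positivity)
  exact contDiffAt_const.mul ((contDiffAt_const.mul h2).exp)

lemma contDiffOn_yf (α ε : ℝ) (hα : 1 ≤ α) (hε : ε ∈ Ioo (0:ℝ) 1) :
    ContDiffOn ℝ (⊤ : ℕ∞) (yf α ε) (Ioo 0 1) := by
  have ha := a_pos α ε hε
  intro t ht
  apply ContDiffAt.contDiffWithinAt
  have h1 : ContDiffAt ℝ (⊤ : ℕ∞) (fun t : ℝ => t + ac α ε) t :=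
    (contDiff_id.add contDiff_const).contDiffAt
  have h2 : ContDiffAt ℝ (⊤ : ℕ∞) (fun t : ℝ => (t + ac α ε) ^ (-α)) t :=
    h1.rpow_const_of_ne (by have := ht.1; positivity)
  exact contDiffAt_const.mul ((contDiffAt_const.mul h2).exp)

/-- derivative bounds for xf -/
lemma xf_bound (α ε : ℝ) (hα : 1 ≤ α) (hε : ε ∈ Ioo (0:ℝ) 1) (n : ℕ) (t : ℝ)
    (ht : t ∈ Ioo (0:ℝ) 1) :
    |iteratedDeriv n (xf α ε) t|
      ≤ Real.exp 4 * (5 * α * (α + 1) ^ 2) ^ n * ((n.factorial : ℝ)) ^ ((1:ℝ) + 1 / α) := by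
  have ha := a_pos α ε hε
  have h := deriv_bound_neg α (Real.exp (bc α ε)) (ac α ε) hα ha n t (by have := ht.1; linarith)
  have hC : |Real.exp (bc α ε)| ≤ Real.exp 4 := by
    rw [abs_of_pos (Real.exp_pos _)]
    exact Real.exp_le_exp.mpr (by have := b_le_one α ε hα hε; linarith)
  calc |iteratedDeriv n (xf α ε) t|
      ≤ |Real.exp (bc α ε)| * (5 * α * (α + 1) ^ 2) ^ n
          * ((n.factorial : ℝ)) ^ ((1:ℝ) + 1 / α) := h
    _ ≤ Real.exp 4 * (5 * α * (α + 1) ^ 2) ^ n * ((n.factorial : ℝ)) ^ ((1:ℝ) + 1 / α) := by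
        apply mul_le_mul_of_nonneg_right (mul_le_mul_of_nonneg_right hC (by positivity))
          (by positivity)

/-- derivative bounds for yf -/
lemma yf_bound (α ε : ℝ) (hα : 1 ≤ α) (hε : ε ∈ Ioo (0:ℝ) 1) (n : ℕ) (t : ℝ)
    (ht : t ∈ Ioo (0:ℝ) 1) :
    |iteratedDeriv n (yf α ε) t|
      ≤ Real.exp 4 * (5 * α * (α + 1) ^ 2) ^ n * ((n.factorial : ℝ)) ^ ((1:ℝ) + 1 / α) := by
  have ha := a_pos α ε hε
  have hM : 0 < Mc ε := by have := M_big ε hε; linarith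
  have h := deriv_bound_pos α (ε ^ 2 * Real.exp (-(bc α ε))) (ac α ε) (Mc ε) hα ha hM n t
    (by have := ht.1; linarith) (u_cap α ε hα hε t ht.1)
  have hC : Real.exp (2 * Mc ε) * |ε ^ 2 * Real.exp (-(bc α ε))| ≤ Real.exp 4 := by
    have hε0 : 0 < ε := hε.1
    rw [abs_of_pos (by positivity : (0:ℝ) < ε ^ 2 * Real.exp (-(bc α ε)))]
    have hb := b_pos α ε hε
    have heps : ε ^ 2 = Real.exp (-(2 * Lc ε)) := by
      have h1 : ε = Real.exp (-(Lc ε)) := eps_eq ε hε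
      calc ε ^ 2 = Real.exp (-(Lc ε)) * Real.exp (-(Lc ε)) := by rw [← h1]; ring
        _ = Real.exp (-(2 * Lc ε)) := by rw [← Real.exp_add]; ring_nf
    rw [heps, ← Real.exp_add, ← Real.exp_add]
    apply Real.exp_le_exp.mpr
    unfold Mc
    linarith
  calc |iteratedDeriv n (yf α ε) t|
      ≤ Real.exp (2 * Mc ε) * |ε ^ 2 * Real.exp (-(bc α ε))| * (5 * α * (α + 1) ^ 2) ^ n
          * ((n.factorial : ℝ)) ^ ((1:ℝ) + 1 / α) := h
    _ ≤ Real.exp 4 * (5 * α * (α + 1) ^ 2) ^ n * ((n.factorial : ℝ)) ^ ((1:ℝ) + 1 / α) := by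
        apply mul_le_mul_of_nonneg_right (mul_le_mul_of_nonneg_right hC (by positivity))
          (by positivity)

/-- the chart hits every point with `ε ≤ p < 1` exactly. -/
lemma chart_hits (α ε : ℝ) (hα : 1 ≤ α) (hε : ε ∈ Ioo (0:ℝ) 1) (p : ℝ)
    (hp1 : ε ≤ p) (hp2 : p < 1) :
    ∃ t ∈ Ioo (0:ℝ) 1, xf α ε t = p ∧ yf α ε t = ε ^ 2 / p := by
  have hα0 : (0:ℝ) < α := lt_of_lt_of_le one_pos hα
  have hp0 : 0 < p := lt_of_lt_of_le hε.1 hp1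
  have hlogp : Real.log p < 0 := Real.log_neg hp0 hp2
  have ha := a_pos α ε hε
  have hb := b_pos α ε hε
  set Λ : ℝ := bc α ε - Real.log p with hΛdef
  have hΛ : 0 < Λ := by unfold Λ; linarith
  have hΛltM : Λ < Mc ε := by
    have h1 : -Real.log p ≤ Lc ε := by
      have := Real.log_le_log hε.1 hp1
      unfold Lc; linarith
    have h2 := b_le_one α ε hα hε
    unfold Mc
    unfold Λ
    linarith
  have hΛgtb : bc α ε < Λ := by unfold Λ; linarith
  refine ⟨Λ ^ (-α⁻¹) - ac α ε, ⟨?_, ?_⟩, ?_, ?_⟩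
  · -- 0 < t
    have := rpow_neg_lt Λ (Mc ε) α⁻¹ hΛ hΛltM (by positivity)
    unfold ac
    linarith
  · -- t < 1
    have h1 : Λ ^ (-α⁻¹) < (bc α ε) ^ (-α⁻¹) := rpow_neg_lt (bc α ε) Λ α⁻¹ hb hΛgtb (by positivity)
    have h2 : (bc α ε) ^ (-α⁻¹) = 1 + ac α ε := by
      unfold bc
      rw [← Real.rpow_mul (by linarith : (0:ℝ) ≤ 1 + ac α ε)]
      rw [show -α * -α⁻¹ = α * α⁻¹ by ring, mul_inv_cancel₀ hα0.ne', Real.rpow_one]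
    rw [h2] at h1
    linarith
  · -- xf value
    have hta : Λ ^ (-α⁻¹) - ac α ε + ac α ε = Λ ^ (-α⁻¹) := by ring
    unfold xf
    rw [hta, rpow_neg_rpow_neg Λ α hΛ hα0.ne']
    rw [← Real.exp_add]
    rw [show bc α ε + -1 * Λ = Real.log p by unfold Λ; ring]
    exact Real.exp_log hp0
  · -- yf value
    have hta : Λ ^ (-α⁻¹) - ac α ε + ac α ε = Λ ^ (-α⁻¹) := by ring
    unfold yf
    rw [hta, rpow_neg_rpow_neg Λ α hΛ hα0.ne']
    rw [mul_assoc, ← Real.exp_add]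
    rw [show -(bc α ε) + 1 * Λ = -Real.log p by unfold Λ; ring]
    rw [Real.exp_neg, Real.exp_log hp0]
    ring

lemma mild_xf (α ε : ℝ) (hα : 1 ≤ α) (hε : ε ∈ Ioo (0:ℝ) 1) :
    IsMild (Ioo 0 1) (xf α ε) (5 * α * (α + 1) ^ 2) (Real.exp 4) (1 / α) := by
  refine ⟨contDiffOn_xf α ε hα hε, fun t ht n => ?_⟩
  rw [show (1 / α + 1 : ℝ) = (1:ℝ) + 1 / α by ring]
  calc |iteratedDeriv n (xf α ε) t| ≤ _ := xf_bound α ε hα hε n t ht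
    _ = Real.exp 4 * (5 * α * (α + 1) ^ 2) ^ n * (n.factorial : ℝ) ^ ((1:ℝ) + 1 / α) := rfl

lemma mild_yf (α ε : ℝ) (hα : 1 ≤ α) (hε : ε ∈ Ioo (0:ℝ) 1) :
    IsMild (Ioo 0 1) (yf α ε) (5 * α * (α + 1) ^ 2) (Real.exp 4) (1 / α) := by
  refine ⟨contDiffOn_yf α ε hα hε, fun t ht n => ?_⟩
  rw [show (1 / α + 1 : ℝ) = (1:ℝ) + 1 / α by ring]
  exact yf_bound α ε hα hε n t ht

end Stmt15Aux

end

open Stmt15Aux in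
theorem stmt15 (α : ℝ) (hα : 1 ≤ α) :
    ∃ A B : ℝ, 0 < A ∧ 0 < B ∧ ∀ ε ∈ Ioo (0:ℝ) 1,
      ∃ φ₁ φ₂ φ₃ : ℝ → ℝ × ℝ,
        IsMildPair φ₁ A B (1 / α) ∧ IsMildPair φ₂ A B (1 / α) ∧ IsMildPair φ₃ A B (1 / α) ∧
        {p : ℝ × ℝ | p.1 ∈ Ioo (0:ℝ) 1 ∧ p.2 ∈ Ioo (0:ℝ) 1 ∧ p.1 * p.2 = ε ^ 2} ⊆
          φ₁ '' Ioo 0 1 ∪ φ₂ '' Ioo 0 1 ∪ φ₃ '' Ioo 0 1 := by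
  have hα0 : (0:ℝ) < α := lt_of_lt_of_le one_pos hα
  refine ⟨5 * α * (α + 1) ^ 2, Real.exp 4, by positivity, Real.exp_pos _, ?_⟩
  intro ε hε
  refine ⟨fun t => (xf α ε t, yf α ε t), fun t => (yf α ε t, xf α ε t),
    fun t => (xf α ε t, yf α ε t), ?_, ?_, ?_, ?_⟩
  · exact ⟨mild_xf α ε hα hε, mild_yf α ε hα hε⟩
  · exact ⟨mild_yf α ε hα hε, mild_xf α ε hα hε⟩
  · exact ⟨mild_xf α ε hα hε, mild_yf α ε hα hε⟩
  · rintro ⟨p₁, p₂⟩ ⟨hp₁, hp₂, hmul⟩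
    simp only [mem_Ioo] at hp₁ hp₂
    have hp₁0 : 0 < p₁ := hp₁.1
    have hp₂0 : 0 < p₂ := hp₂.1
    by_cases hc : ε ≤ p₁
    · obtain ⟨t, ht, hx, hy⟩ := chart_hits α ε hα hε p₁ hc hp₁.2
      left; left
      refine ⟨t, ht, ?_⟩
      have : ε ^ 2 / p₁ = p₂ := by
        field_simp
        linarith [hmul]
      show (xf α ε t, yf α ε t) = (p₁, p₂)
      rw [Prod.ext_iff]
      exact ⟨hx, by simp only []; rw [hy, this]⟩
    · push_neg at hc
      have hεp₂ : ε ≤ p₂ := by nlinarith [hε.1, hε.2]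
      obtain ⟨t, ht, hx, hy⟩ := chart_hits α ε hα hε p₂ hεp₂ hp₂.2
      left; right
      refine ⟨t, ht, ?_⟩
      have : ε ^ 2 / p₂ = p₁ := by
        field_simp
        linarith [hmul]
      show (yf α ε t, xf α ε t) = (p₁, p₂)
      rw [Prod.ext_iff]
      exact ⟨by simp only []; rw [hy, this], hx⟩
end
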